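/- arXiv:2111.12312 — 6 statements merged into one kernel-verified Lean document; each statement's English description precedes it below -/
import Mathlib

section
/- For i = 1,2, let (X_i,𝒳_i) and (Y_i,𝒴_i) be measurable spaces with measurable distortion functions ρ_i: X_i×Y_i → [0,∞], and let μ_i be a σ-finite measure on (X_i,𝒳_i) that is ρ_i-subregular of dimension m_i ∈ (0,∞) with subregularity constants c_i ∈ (0,∞) and δ_i ∈ (0,∞]. Define the distortion function ρ̄((x₁,x₂),(y₁,y₂)) = ρ₁(x₁,y₁) + ρ₂(x₂,y₂) on the product spaces. Then the product measure μ̄ = μ₁ ⊗ μ₂ satisfies μ̄(B_{ρ̄}(y,δ)) ≤ c₁·c₂·[Γ(1+m₁)·Γ(1+m₂)/Γ(1+m₁+m₂)]·δ^{m₁+m₂} for all y ∈ Y₁×Y₂ and all δ ∈ (0, min(δ₁,δ₂)). -/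
/-! By Tonelli, the product ball has measure `∫ μ₂ {ρ₂(·, y₂) < δ - ρ₁(x₁, y₁)} dμ₁(x₁)`, which
subregularity of `μ₂` bounds by `c₂ ∫ (δ - ρ₁(·, y₁))₊ ^ m₂ dμ₁`. By the layer-cake formula this is
`c₂ m₂ ∫₀^δ t ^ (m₂ - 1) μ₁ {ρ₁(·, y₁) < δ - t} dt`, and subregularity of `μ₁` bounds it by the Beta
integral `c₁ c₂ m₂ ∫₀^δ t ^ (m₂ - 1) (δ - t) ^ m₁ dt = c₁ c₂ m₂ B(m₂, m₁ + 1) δ ^ (m₁ + m₂)`.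

The positive part `(δ - a)₊` of `a : ℝ≥0∞` is written `(ENNReal.ofReal δ - a).toReal`: truncated
subtraction makes it vanish for `a ≥ δ`, including `a = ∞`. -/

open MeasureTheory Set
open scoped ENNReal

theorem ENNReal.lt_toReal_ofReal_sub_iff {a : ℝ≥0∞} {δ t : ℝ} (ht : 0 ≤ t) :
    t < (ENNReal.ofReal δ - a).toReal ↔ a < ENNReal.ofReal (δ - t) := by
  induction a with
  | top => simp [not_lt.2 ht]
  | coe a =>
    rw [← ENNReal.ofReal_coe_nnreal, ← ENNReal.ofReal_sub _ a.coe_nonneg, ENNReal.toReal_ofReal',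
      lt_max_iff, ENNReal.ofReal_lt_ofReal_iff']
    constructor
    · rintro (h | h) <;> constructor <;> linarith [a.coe_nonneg]
    · rintro ⟨h, -⟩; left; linarith

theorem Real.integral_rpow_mul_sub_rpow {a b δ : ℝ} (ha : 0 < a) (hb : 0 < b) (hδ : 0 < δ) :
    ∫ t in 0..δ, t ^ (a - 1) * (δ - t) ^ (b - 1) =
      δ ^ (a + b - 1) * (Real.Gamma a * Real.Gamma b / Real.Gamma (a + b)) := by
  apply Complex.ofReal_injective
  have hcpow : ∀ t ∈ uIcc 0 δ, ((t ^ (a - 1) * (δ - t) ^ (b - 1) : ℝ) : ℂ) =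
      (t : ℂ) ^ ((a : ℂ) - 1) * ((δ : ℂ) - t) ^ ((b : ℂ) - 1) := by
    intro t ht
    rw [uIcc_of_le hδ.le] at ht
    rw [Complex.ofReal_mul, Complex.ofReal_cpow ht.1, Complex.ofReal_cpow (sub_nonneg.2 ht.2)]
    push_cast
    rfl
  rw [← intervalIntegral.integral_ofReal, intervalIntegral.integral_congr hcpow,
    Complex.betaIntegral_scaled _ _ hδ,
    Complex.betaIntegral_eq_Gamma_mul_div _ _ (by simpa) (by simpa)]
  push_cast
  rw [Complex.ofReal_cpow hδ.le, ← Complex.ofReal_add, Complex.Gamma_ofReal, Complex.Gamma_ofReal,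
    Complex.Gamma_ofReal]
  push_cast
  ring_nf

theorem Real.mul_integral_rpow_mul_sub_rpow {m p δ : ℝ} (hm : 0 ≤ m) (hp : 0 < p) (hδ : 0 < δ) :
    p * ∫ t in 0..δ, t ^ (p - 1) * (δ - t) ^ m =
      Real.Gamma (1 + m) * Real.Gamma (1 + p) / Real.Gamma (1 + m + p) * δ ^ (m + p) := by
  have hbeta := Real.integral_rpow_mul_sub_rpow hp (by linarith : 0 < m + 1) hδ
  rw [add_sub_cancel_right, show p + (m + 1) - 1 = m + p by ring] at hbeta
  rw [hbeta, show 1 + m + p = p + (m + 1) by ring, add_comm 1 m, add_comm 1 p,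
    Real.Gamma_add_one hp.ne']
  have : Real.Gamma (p + (m + 1)) ≠ 0 := (Real.Gamma_pos_of_pos (by linarith)).ne'
  field_simp

theorem Real.lintegral_Ioc_rpow_mul_sub_rpow {m p δ : ℝ} (hm : 0 ≤ m) (hp : 0 < p) (hδ : 0 ≤ δ) :
    ∫⁻ t in Ioc 0 δ, ENNReal.ofReal (t ^ (p - 1) * (δ - t) ^ m) =
      ENNReal.ofReal (∫ t in 0..δ, t ^ (p - 1) * (δ - t) ^ m) := by
  have hint : IntegrableOn (fun t => t ^ (p - 1) * (δ - t) ^ m) (Ioc 0 δ) := by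
    rw [← intervalIntegrable_iff_integrableOn_Ioc_of_le hδ]
    refine (intervalIntegral.intervalIntegrable_rpow' (by linarith)).mul_continuousOn ?_
    exact ((Real.continuous_rpow_const hm).comp (continuous_sub_left δ)).continuousOn
  have hnonneg : 0 ≤ᵐ[volume.restrict (Ioc 0 δ)] fun t => t ^ (p - 1) * (δ - t) ^ m :=
    ae_restrict_of_forall_mem measurableSet_Ioc fun t ht =>
      mul_nonneg (Real.rpow_nonneg ht.1.le _) (Real.rpow_nonneg (sub_nonneg.2 ht.2) _)
  rw [← ofReal_integral_eq_lintegral_ofReal hint hnonneg, intervalIntegral.integral_of_le hδ]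

section

variable {X Y : Type*} [MeasurableSpace X]

def IsSubregular (μ : Measure X) (ρ : X → Y → ℝ≥0∞) (m c : ℝ) (δ₀ : ℝ≥0∞) : Prop :=
  ∀ y : Y, ∀ δ : ℝ, 0 < δ → ENNReal.ofReal δ < δ₀ →
    μ {x | ρ x y < ENNReal.ofReal δ} ≤ ENNReal.ofReal (c * δ ^ m)

namespace IsSubregular

variable {μ : Measure X} {ρ : X → Y → ℝ≥0∞} {m c δ : ℝ} {δ₀ : ℝ≥0∞}

theorem measure_add_lt_le (h : IsSubregular μ ρ m c δ₀) (hδ : ENNReal.ofReal δ < δ₀)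
    (a : ℝ≥0∞) (y : Y) :
    μ {x | a + ρ x y < ENNReal.ofReal δ} ≤
      ENNReal.ofReal (c * (ENNReal.ofReal δ - a).toReal ^ m) := by
  rcases lt_or_ge a (ENNReal.ofReal δ) with ha | ha
  · have hslack : ENNReal.ofReal (ENNReal.ofReal δ - a).toReal = ENNReal.ofReal δ - a :=
      ENNReal.ofReal_toReal (ENNReal.sub_ne_top ENNReal.ofReal_ne_top)
    refine (measure_mono fun x hx => ?_).trans (h y _ ?_ ?_)
    · rw [mem_ofPred_eq, hslack]
      exact lt_tsub_iff_left.2 hx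
    · exact ENNReal.toReal_pos (tsub_pos_of_lt ha).ne' (ENNReal.sub_ne_top ENNReal.ofReal_ne_top)
    · rw [hslack]
      exact tsub_le_self.trans_lt hδ
  · have hempty : {x | a + ρ x y < ENNReal.ofReal δ} = ∅ :=
      eq_empty_of_forall_notMem fun x hx => (ha.trans le_self_add).not_gt hx
    simp [hempty]

theorem measure_lt_toReal_ofReal_sub_le (h : IsSubregular μ ρ m c δ₀)
    (hδ₀ : ENNReal.ofReal δ < δ₀) (y : Y) {t : ℝ} (ht : 0 < t) :
    μ {x | t < (ENNReal.ofReal δ - ρ x y).toReal} ≤ ENNReal.ofReal (c * (δ - t) ^ m) := by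
  simp_rw [ENNReal.lt_toReal_ofReal_sub_iff ht.le]
  rcases lt_or_ge t δ with htδ | htδ
  · exact h y _ (sub_pos.2 htδ) ((ENNReal.ofReal_le_ofReal (by linarith)).trans_lt hδ₀)
  · simp [ENNReal.ofReal_eq_zero.2 (sub_nonpos.2 htδ)]

theorem lintegral_rpow_le (h : IsSubregular μ ρ m c δ₀) {y : Y} (hρ : Measurable fun x => ρ x y)
    {p : ℝ} (hm : 0 ≤ m) (hc : 0 ≤ c) (hp : 0 < p) (hδ : 0 < δ) (hδ₀ : ENNReal.ofReal δ < δ₀) :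
    ∫⁻ x, ENNReal.ofReal ((ENNReal.ofReal δ - ρ x y).toReal ^ p) ∂μ ≤
      ENNReal.ofReal (c * (Real.Gamma (1 + m) * Real.Gamma (1 + p) / Real.Gamma (1 + m + p) *
        δ ^ (m + p))) := by
  set s : X → ℝ := fun x => (ENNReal.ofReal δ - ρ x y).toReal
  have hvanish : ∀ t, δ ≤ t → μ {x | t < s x} = 0 := fun t ht => by
    simp_rw [s, ENNReal.lt_toReal_ofReal_sub_iff (hδ.le.trans ht),
      ENNReal.ofReal_eq_zero.2 (sub_nonpos.2 ht)]
    simp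
  have hbound : ∀ t ∈ Ioc 0 δ, μ {x | t < s x} * ENNReal.ofReal (t ^ (p - 1)) ≤
      ENNReal.ofReal c * ENNReal.ofReal (t ^ (p - 1) * (δ - t) ^ m) := fun t ht => by
    have hpow := Real.rpow_nonneg (sub_nonneg.2 ht.2) m
    calc μ {x | t < s x} * ENNReal.ofReal (t ^ (p - 1))
        ≤ ENNReal.ofReal (c * (δ - t) ^ m) * ENNReal.ofReal (t ^ (p - 1)) := by
          gcongr
          exact h.measure_lt_toReal_ofReal_sub_le hδ₀ y ht.1
      _ = ENNReal.ofReal c * ENNReal.ofReal (t ^ (p - 1) * (δ - t) ^ m) := by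
          rw [← ENNReal.ofReal_mul (by positivity), ← ENNReal.ofReal_mul hc]
          ring_nf
  calc ∫⁻ x, ENNReal.ofReal (s x ^ p) ∂μ
      = ENNReal.ofReal p * ∫⁻ t in Ioi 0, μ {x | t < s x} * ENNReal.ofReal (t ^ (p - 1)) :=
        lintegral_rpow_eq_lintegral_meas_lt_mul μ
          (Filter.Eventually.of_forall fun x => ENNReal.toReal_nonneg)
          (by fun_prop : Measurable s).aemeasurable hp
    _ ≤ ENNReal.ofReal p * ((∫⁻ t in Ioc 0 δ, μ {x | t < s x} * ENNReal.ofReal (t ^ (p - 1))) +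
          ∫⁻ t in Ioi δ, μ {x | t < s x} * ENNReal.ofReal (t ^ (p - 1))) := by
      rw [← Ioc_union_Ioi_eq_Ioi hδ.le]
      exact mul_le_mul_right (lintegral_union_le _ _ _) _
    _ = ENNReal.ofReal p * ∫⁻ t in Ioc 0 δ, μ {x | t < s x} * ENNReal.ofReal (t ^ (p - 1)) := by
      rw [setLIntegral_eq_zero measurableSet_Ioi fun t ht => by simp [hvanish t (le_of_lt ht)],
        add_zero]
    _ ≤ ENNReal.ofReal p *
          ∫⁻ t in Ioc 0 δ, ENNReal.ofReal c * ENNReal.ofReal (t ^ (p - 1) * (δ - t) ^ m) :=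
      mul_le_mul_right (setLIntegral_mono (by fun_prop) hbound) _
    _ = _ := by
      rw [lintegral_const_mul' _ _ ENNReal.ofReal_ne_top,
        Real.lintegral_Ioc_rpow_mul_sub_rpow hm hp hδ.le, ← ENNReal.ofReal_mul hc,
        ← ENNReal.ofReal_mul hp.le, mul_left_comm, Real.mul_integral_rpow_mul_sub_rpow hm hp hδ]

theorem prod {X' Y' : Type*} [MeasurableSpace X'] [MeasurableSpace Y] [MeasurableSpace Y']
    {μ' : Measure X'} [SFinite μ'] {ρ' : X' → Y' → ℝ≥0∞} {m' c' : ℝ} {δ₀' : ℝ≥0∞}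
    (h : IsSubregular μ ρ m c δ₀) (h' : IsSubregular μ' ρ' m' c' δ₀')
    (hρ : Measurable (Function.uncurry ρ)) (hρ' : Measurable (Function.uncurry ρ'))
    (hm : 0 ≤ m) (hm' : 0 < m') (hc : 0 ≤ c) (hc' : 0 ≤ c') :
    IsSubregular (μ.prod μ') (fun (x : X × X') (y : Y × Y') => ρ x.1 y.1 + ρ' x.2 y.2) (m + m')
      (c * c' * (Real.Gamma (1 + m) * Real.Gamma (1 + m') / Real.Gamma (1 + m + m')))
      (min δ₀ δ₀') := by
  intro y δ hδ hδ₀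
  have hρy : Measurable fun x => ρ x y.1 := hρ.comp (measurable_id.prodMk measurable_const)
  have hρy' : Measurable fun x => ρ' x y.2 := hρ'.comp (measurable_id.prodMk measurable_const)
  have hball : MeasurableSet {x : X × X' | ρ x.1 y.1 + ρ' x.2 y.2 < ENNReal.ofReal δ} :=
    measurableSet_lt (by fun_prop) measurable_const
  calc (μ.prod μ') {x | ρ x.1 y.1 + ρ' x.2 y.2 < ENNReal.ofReal δ}
      = ∫⁻ x, μ' {x' | ρ x y.1 + ρ' x' y.2 < ENNReal.ofReal δ} ∂μ := Measure.prod_apply hball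
    _ ≤ ∫⁻ x, ENNReal.ofReal (c' * (ENNReal.ofReal δ - ρ x y.1).toReal ^ m') ∂μ :=
      lintegral_mono fun x => h'.measure_add_lt_le (hδ₀.trans_le (min_le_right _ _)) _ _
    _ = ENNReal.ofReal c' *
          ∫⁻ x, ENNReal.ofReal ((ENNReal.ofReal δ - ρ x y.1).toReal ^ m') ∂μ := by
      simp_rw [ENNReal.ofReal_mul hc']
      exact lintegral_const_mul' _ _ ENNReal.ofReal_ne_top
    _ ≤ ENNReal.ofReal c' * ENNReal.ofReal (c * (Real.Gamma (1 + m) * Real.Gamma (1 + m') /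
          Real.Gamma (1 + m + m') * δ ^ (m + m'))) := by
      gcongr
      exact h.lintegral_rpow_le hρy hm hc hm' hδ (hδ₀.trans_le (min_le_left _ _))
    _ = _ := by
      rw [← ENNReal.ofReal_mul hc']
      ring_nf

end IsSubregular

end

theorem subregular_prod_two_general
    {X₁ Y₁ X₂ Y₂ : Type*} [MeasurableSpace X₁] [MeasurableSpace Y₁]
    [MeasurableSpace X₂] [MeasurableSpace Y₂]
    (ρ₁ : X₁ → Y₁ → ℝ≥0∞) (ρ₂ : X₂ → Y₂ → ℝ≥0∞)
    (hρ₁ : Measurable (Function.uncurry ρ₁)) (hρ₂ : Measurable (Function.uncurry ρ₂))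
    (μ₁ : Measure X₁) (μ₂ : Measure X₂) [SigmaFinite μ₂]
    (m₁ m₂ c₁ c₂ : ℝ) (δ₁ δ₂ : ℝ≥0∞)
    (hm₁ : 0 < m₁) (hm₂ : 0 < m₂) (hc₁ : 0 < c₁) (hc₂ : 0 < c₂)
    (hsub₁ : ∀ y : Y₁, ∀ δ : ℝ, 0 < δ → ENNReal.ofReal δ < δ₁ →
      μ₁ {x | ρ₁ x y < ENNReal.ofReal δ} ≤ ENNReal.ofReal (c₁ * δ ^ m₁))
    (hsub₂ : ∀ y : Y₂, ∀ δ : ℝ, 0 < δ → ENNReal.ofReal δ < δ₂ →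
      μ₂ {x | ρ₂ x y < ENNReal.ofReal δ} ≤ ENNReal.ofReal (c₂ * δ ^ m₂)) :
    ∀ y : Y₁ × Y₂, ∀ δ : ℝ, 0 < δ → ENNReal.ofReal δ < min δ₁ δ₂ →
      (μ₁.prod μ₂) {x : X₁ × X₂ | ρ₁ x.1 y.1 + ρ₂ x.2 y.2 < ENNReal.ofReal δ} ≤
        ENNReal.ofReal (c₁ * c₂ *
          (Real.Gamma (1 + m₁) * Real.Gamma (1 + m₂) / Real.Gamma (1 + m₁ + m₂)) *
          δ ^ (m₁ + m₂)) :=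
  IsSubregular.prod hsub₁ hsub₂ hρ₁ hρ₂ hm₁.le hm₂ hc₁.le hc₂.le

/-- If `μᵢ` is σ-finite and `ρᵢ`-subregular of dimension `mᵢ` with
constants `cᵢ, δᵢ` (i = 1,2), then the product measure `μ₁ ⊗ μ₂` satisfies the
subregularity condition for the sum distortion `ρ̄((x₁,x₂),(y₁,y₂)) = ρ₁(x₁,y₁) + ρ₂(x₂,y₂)`
with dimension `m₁+m₂`, constant `c₁·c₂·Γ(1+m₁)·Γ(1+m₂)/Γ(1+m₁+m₂)`, and radius
threshold `min δ₁ δ₂`. -/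
theorem subregular_prod_two
    {X₁ Y₁ X₂ Y₂ : Type*} [MeasurableSpace X₁] [MeasurableSpace Y₁]
    [MeasurableSpace X₂] [MeasurableSpace Y₂]
    (ρ₁ : X₁ → Y₁ → ℝ≥0∞) (ρ₂ : X₂ → Y₂ → ℝ≥0∞)
    (hρ₁ : Measurable (Function.uncurry ρ₁)) (hρ₂ : Measurable (Function.uncurry ρ₂))
    (μ₁ : Measure X₁) (μ₂ : Measure X₂) [SigmaFinite μ₁] [SigmaFinite μ₂]
    (m₁ m₂ c₁ c₂ : ℝ) (δ₁ δ₂ : ℝ≥0∞)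
    (hm₁ : 0 < m₁) (hm₂ : 0 < m₂) (hc₁ : 0 < c₁) (hc₂ : 0 < c₂)
    (hδ₁ : 0 < δ₁) (hδ₂ : 0 < δ₂)
    (hsub₁ : ∀ y : Y₁, ∀ δ : ℝ, 0 < δ → ENNReal.ofReal δ < δ₁ →
      μ₁ {x | ρ₁ x y < ENNReal.ofReal δ} ≤ ENNReal.ofReal (c₁ * δ ^ m₁))
    (hsub₂ : ∀ y : Y₂, ∀ δ : ℝ, 0 < δ → ENNReal.ofReal δ < δ₂ →
      μ₂ {x | ρ₂ x y < ENNReal.ofReal δ} ≤ ENNReal.ofReal (c₂ * δ ^ m₂)) :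
    ∀ y : Y₁ × Y₂, ∀ δ : ℝ, 0 < δ → ENNReal.ofReal δ < min δ₁ δ₂ →
      (μ₁.prod μ₂) {x : X₁ × X₂ | ρ₁ x.1 y.1 + ρ₂ x.2 y.2 < ENNReal.ofReal δ} ≤
        ENNReal.ofReal (c₁ * c₂ *
          (Real.Gamma (1 + m₁) * Real.Gamma (1 + m₂) / Real.Gamma (1 + m₁ + m₂)) *
          δ ^ (m₁ + m₂)) :=
  subregular_prod_two_general ρ₁ ρ₂ hρ₁ hρ₂ μ₁ μ₂ m₁ m₂ c₁ c₂ δ₁ δ₂ hm₁ hm₂ hc₁ hc₂ hsub₁ hsub₂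
end

section
/- Fix k ∈ (0,∞). For i = 1,…,ℓ, let (X_i,𝒳_i) and (Y_i,𝒴_i) be measurable spaces with measurable distortion functions ρ_i: X_i×Y_i → [0,∞], let α_i ∈ (0,∞), and define the weighted distortion function ρ_{(ℓ)}((x₁,…,x_ℓ),(y₁,…,y_ℓ)) = Σ_{i=1}^ℓ α_i·ρ_i(x_i,y_i). Suppose that for each i, ν_i is a σ-finite measure on (Y_i,𝒴_i) that is ρ_i^{1/k}-superregular of dimension m_i ∈ (0,∞) with superregularity constants b_i ∈ (0,∞) and δ_i ∈ (0,∞]. Then the product measure ν^{(ℓ)} = ν₁ ⊗ ⋯ ⊗ ν_ℓ satisfies ν^{(ℓ)}(B̃_{ρ_{(ℓ)}^{1/k}}(x^{(ℓ)},δ)) ≥ b_{(ℓ)}·δ^{m_{(ℓ)}} for all x^{(ℓ)} ∈ X₁×⋯×X_ℓ and δ ∈ (0,δ_{(ℓ)}), where m_{(ℓ)} = Σ_{i=1}^ℓ m_i, b_{(ℓ)} = [∏_{i=1}^ℓ Γ(1+m_i/k) / Γ(1+Σ_{i=1}^ℓ m_i/k)]·∏_{i=1}^ℓ b_i·α_i^{-m_i/k},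 and δ_{(ℓ)} = min{α₁^{1/k}δ₁,…,α_ℓ^{1/k}δ_ℓ}. -/
open MeasureTheory Set
open scoped ENNReal

/-!
For two factors, `(μ ⊗ ν){f + g < s} = ∫ μ{f < s - g} dν ≥ ∫ b (s - g)₊^m dν`. Writing
`(s - g)₊^m = ∫₀ˢ m t^(m-1) 1{g < s - t} dt` and exchanging the integrals turns the right side into
`∫₀ˢ b m t^(m-1) ν{g < s - t} dt ≥ b d m ∫₀ˢ t^(m-1) (s - t)^n dt`, a Beta integral equal to
`Γ(1+m) Γ(1+n) / Γ(1+m+n) · b d s^(m+n)`. Induction handles `ℓ` factors, and the weights `αᵢ` and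
the power `1/k` only rescale dimensions, constants and radii, because `{ρ^(1/k) < t} = {ρ < t^k}`.
-/

theorem integral_rpow_mul_sub_rpow {p q s : ℝ} (hp : 0 < p) (hq : 0 < q) (hs : 0 < s) :
    ∫ t in 0..s, t ^ (p - 1) * (s - t) ^ (q - 1)
      = Real.Gamma p * Real.Gamma q / Real.Gamma (p + q) * s ^ (p + q - 1) := by
  have h := Complex.betaIntegral_scaled p q hs
  rw [Complex.betaIntegral_eq_Gamma_mul_div _ _ (by simpa) (by simpa)] at h
  apply Complex.ofReal_injective
  rw [← intervalIntegral.integral_ofReal]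
  convert h using 1
  · refine intervalIntegral.integral_congr fun t ht => ?_
    rw [uIcc_of_le hs.le] at ht
    push_cast
    rw [Complex.ofReal_cpow ht.1, Complex.ofReal_cpow (sub_nonneg.2 ht.2)]
    push_cast; ring_nf
  · push_cast
    rw [Complex.ofReal_cpow hs.le, ← Complex.ofReal_add, Complex.Gamma_ofReal, Complex.Gamma_ofReal,
      Complex.Gamma_ofReal]
    push_cast; ring

theorem lintegral_Ioo_rpow_mul_sub_rpow {p q s : ℝ} (hp : 0 < p) (hq : 0 ≤ q) (hs : 0 < s) :
    ∫⁻ t in Ioo 0 s, ENNReal.ofReal (p * t ^ (p - 1) * (s - t) ^ q)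
      = ENNReal.ofReal
          (Real.Gamma (1 + p) * Real.Gamma (1 + q) / Real.Gamma (1 + p + q) * s ^ (p + q)) := by
  have hint : IntegrableOn (fun t => p * t ^ (p - 1) * (s - t) ^ q) (Ioo 0 s) := by
    refine (intervalIntegrable_iff_integrableOn_Ioo_of_le hs.le).mp ?_
    exact ((intervalIntegral.intervalIntegrable_rpow' (by linarith)).const_mul p).mul_continuousOn
      ((continuous_const.sub continuous_id).continuousOn.rpow_const fun _ _ => Or.inr hq)
  rw [← ofReal_integral_eq_lintegral_ofReal hint]
  · congr 1
    have h := integral_rpow_mul_sub_rpow hp (by linarith : 0 < q + 1) hs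
    rw [← integral_Ioc_eq_integral_Ioo, ← intervalIntegral.integral_of_le hs.le]
    simp only [mul_assoc, intervalIntegral.integral_const_mul, add_sub_cancel_right] at h ⊢
    rw [h, add_comm 1 p, Real.Gamma_add_one hp.ne', add_comm 1 q, add_assoc, add_comm 1,
      show p + (q + 1) - 1 = p + q by ring]
    ring
  · filter_upwards [ae_restrict_mem measurableSet_Ioo] with t ht
    have := sub_pos.2 ht.2
    have := ht.1
    positivity

theorem lintegral_Ioo_mul_rpow_sub_one {p s : ℝ} (hp : 0 < p) (hs : 0 < s) :
    ∫⁻ t in Ioo 0 s, ENNReal.ofReal (p * t ^ (p - 1)) = ENNReal.ofReal (s ^ p) := by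
  simpa [(Real.Gamma_pos_of_pos (by linarith : 0 < 1 + p)).ne'] using
    lintegral_Ioo_rpow_mul_sub_rpow hp le_rfl hs

/-- `ν` is `ρ`-superregular of dimension `m` with constants `b, δ` in the sense of the paper iff
`IsSuperregular ν (ρ x) m b δ` holds for every `x`. -/
def IsSuperregular {A : Type*} [MeasurableSpace A] (μ : Measure A) (f : A → ℝ≥0∞) (m b : ℝ)
    (δ : ℝ≥0∞) : Prop :=
  ∀ t : ℝ, 0 < t → ENNReal.ofReal t < δ →
    ENNReal.ofReal (b * t ^ m) ≤ μ {a | f a < ENNReal.ofReal t}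

namespace IsSuperregular

variable {A : Type*} [MeasurableSpace A] {μ : Measure A} {f : A → ℝ≥0∞} {m b : ℝ} {δ : ℝ≥0∞}

theorem mono {δ' : ℝ≥0∞} (h : IsSuperregular μ f m b δ) (hδ : δ' ≤ δ) :
    IsSuperregular μ f m b δ' :=
  fun t ht htδ => h t ht (htδ.trans_le hδ)

theorem rpow {r : ℝ} (h : IsSuperregular μ f m b δ) (hr : 0 < r) :
    IsSuperregular μ (fun a => f a ^ r) (m / r) b (δ ^ r) := by
  intro t ht htδ
  have hroot : ENNReal.ofReal (t ^ r⁻¹) ^ r = ENNReal.ofReal t := by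
    rw [← ENNReal.ofReal_rpow_of_pos ht, ENNReal.rpow_inv_rpow hr.ne']
  have hset : {a | f a ^ r < ENNReal.ofReal t} = {a | f a < ENNReal.ofReal (t ^ r⁻¹)} := by
    ext a
    rw [mem_ofPred_eq, mem_ofPred_eq, ← hroot, ENNReal.rpow_lt_rpow_iff hr]
  have hconst : b * t ^ (m / r) = b * (t ^ r⁻¹) ^ m := by
    rw [← Real.rpow_mul ht.le, inv_mul_eq_div]
  rw [hset, hconst]
  refine h _ (by positivity) ?_
  rwa [← ENNReal.rpow_lt_rpow_iff hr, hroot]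

theorem const_mul {a : ℝ} (h : IsSuperregular μ f m b δ) (ha : 0 < a) :
    IsSuperregular μ (fun x => ENNReal.ofReal a * f x) m (b * a ^ (-m))
      (ENNReal.ofReal a * δ) := by
  intro t ht htδ
  have hdiv : ENNReal.ofReal t = ENNReal.ofReal a * ENNReal.ofReal (t / a) := by
    rw [← ENNReal.ofReal_mul ha.le, mul_div_cancel₀ _ ha.ne']
  have ha₀ : ENNReal.ofReal a ≠ 0 := by simpa using ha
  have hset : {x | ENNReal.ofReal a * f x < ENNReal.ofReal t}
      = {x | f x < ENNReal.ofReal (t / a)} := by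
    ext x
    rw [mem_ofPred_eq, mem_ofPred_eq, hdiv, ENNReal.mul_lt_mul_iff_right ha₀ ENNReal.ofReal_ne_top]
  have hconst : b * a ^ (-m) * t ^ m = b * (t / a) ^ m := by
    rw [Real.div_rpow ht.le ha.le, Real.rpow_neg ha.le]
    ring
  rw [hset, hconst]
  refine h _ (by positivity) ?_
  rwa [hdiv, ENNReal.mul_lt_mul_iff_right ha₀ ENNReal.ofReal_ne_top] at htδ

theorem comp_measurePreserving {A' : Type*} [MeasurableSpace A'] {μ' : Measure A'} {T : A' → A}
    (h : IsSuperregular μ f m b δ) (hT : MeasurePreserving T μ' μ) (hf : Measurable f) :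
    IsSuperregular μ' (f ∘ T) m b δ := fun t ht htδ =>
  (h t ht htδ).trans_eq
    (hT.measure_preimage (measurableSet_lt hf measurable_const).nullMeasurableSet).symm

/-- The left side is `b (s - v)₊^m`, written as an integral over `t` whose integrand is measurable
in `v`, so that it can be integrated against the law of `v` and the integrals exchanged. -/
theorem setLIntegral_indicator_le_measure_add (h : IsSuperregular μ f m b δ) (hm : 0 < m)
    (hb : 0 ≤ b) {s : ℝ} (hsδ : ENNReal.ofReal s < δ) (v : ℝ≥0∞) :
    ENNReal.ofReal b *
        ∫⁻ t in Ioo 0 s, {t | v < ENNReal.ofReal (s - t)}.indicator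
          (fun t => ENNReal.ofReal (m * t ^ (m - 1))) t
      ≤ μ {a | f a + v < ENNReal.ofReal s} := by
  by_cases hv : v < ENNReal.ofReal s
  · have hv_top : v ≠ ∞ := hv.ne_top
    have hu : v.toReal < s := (ENNReal.lt_ofReal_iff_toReal_lt hv_top).1 hv
    have hset : {t | v < ENNReal.ofReal (s - t)} ∩ Ioo 0 s = Ioo 0 (s - v.toReal) := by
      ext t
      simp only [mem_inter_iff, mem_ofPred_eq, mem_Ioo, ENNReal.lt_ofReal_iff_toReal_lt hv_top]
      constructor
      · rintro ⟨h1, h2, -⟩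
        exact ⟨h2, by linarith⟩
      · rintro ⟨h1, h2⟩
        exact ⟨by linarith, h1, by linarith [ENNReal.toReal_nonneg (a := v)]⟩
    have hmeas : MeasurableSet {t | v < ENNReal.ofReal (s - t)} :=
      measurableSet_lt measurable_const (measurable_const.sub measurable_id).ennreal_ofReal
    rw [lintegral_indicator hmeas, Measure.restrict_restrict hmeas, hset,
      lintegral_Ioo_mul_rpow_sub_one hm (by linarith), ← ENNReal.ofReal_mul hb]
    refine (h _ (by linarith) ((ENNReal.ofReal_le_ofReal (by simp)).trans_lt hsδ)).trans
      (measure_mono fun a ha => ?_)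
    calc f a + v < ENNReal.ofReal (s - v.toReal) + ENNReal.ofReal v.toReal := by
          rw [ENNReal.ofReal_toReal hv_top]
          exact ENNReal.add_lt_add_right hv_top ha
      _ = ENNReal.ofReal s := by
          rw [← ENNReal.ofReal_add (by linarith) ENNReal.toReal_nonneg, sub_add_cancel]
  · have hzero : ∀ t ∈ Ioo 0 s, {t | v < ENNReal.ofReal (s - t)}.indicator
        (fun t => ENNReal.ofReal (m * t ^ (m - 1))) t = 0 := fun t ht =>
      indicator_of_notMem
        (fun hvt => hv (hvt.trans_le (ENNReal.ofReal_le_ofReal (by linarith [ht.1])))) _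
    rw [setLIntegral_congr_fun measurableSet_Ioo hzero, lintegral_zero, mul_zero]
    exact zero_le

theorem prod {B : Type*} [MeasurableSpace B] {ν : Measure B} [SFinite μ] [SFinite ν]
    {g : B → ℝ≥0∞} {n d : ℝ} {ε : ℝ≥0∞} (hf : IsSuperregular μ f m b δ)
    (hg : IsSuperregular ν g n d ε) (hf_meas : Measurable f) (hg_meas : Measurable g)
    (hm : 0 < m) (hn : 0 ≤ n) (hb : 0 ≤ b) (hd : 0 ≤ d) :
    IsSuperregular (μ.prod ν) (fun x => f x.1 + g x.2) (m + n)
      (Real.Gamma (1 + m) * Real.Gamma (1 + n) / Real.Gamma (1 + m + n) * (b * d)) (min δ ε) := by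
  intro s hs hsδε
  set φ : ℝ → ℝ≥0∞ := fun t => ENNReal.ofReal (m * t ^ (m - 1))
  set F : B → ℝ → ℝ≥0∞ := fun y t => {t | g y < ENNReal.ofReal (s - t)}.indicator φ t
  have hF_meas : Measurable (Function.uncurry F) := by
    refine Measurable.ite ?_ (by fun_prop) measurable_const
    exact measurableSet_lt (hg_meas.comp measurable_fst)
      (measurable_const.sub measurable_snd).ennreal_ofReal
  have hF_int : ∀ t, ∫⁻ y, F y t ∂ν = φ t * ν {y | g y < ENNReal.ofReal (s - t)} := fun t =>
    lintegral_indicator_const (measurableSet_lt hg_meas measurable_const) (φ t)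
  have hS : MeasurableSet {x : A × B | f x.1 + g x.2 < ENNReal.ofReal s} :=
    measurableSet_lt (by fun_prop) measurable_const
  rw [Measure.prod_apply_symm hS]
  calc ENNReal.ofReal
        (Real.Gamma (1 + m) * Real.Gamma (1 + n) / Real.Gamma (1 + m + n) * (b * d) * s ^ (m + n))
      = ENNReal.ofReal b *
          ∫⁻ t in Ioo 0 s, φ t * ENNReal.ofReal (d * (s - t) ^ n) := by
        have hsplit : ∀ t ∈ Ioo 0 s, φ t * ENNReal.ofReal (d * (s - t) ^ n)
            = ENNReal.ofReal d * ENNReal.ofReal (m * t ^ (m - 1) * (s - t) ^ n) := fun t ht => by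
          have := ht.1
          rw [← ENNReal.ofReal_mul (by positivity), ← ENNReal.ofReal_mul hd]
          ring_nf
        rw [setLIntegral_congr_fun measurableSet_Ioo hsplit,
          lintegral_const_mul' _ _ ENNReal.ofReal_ne_top, lintegral_Ioo_rpow_mul_sub_rpow hm hn hs,
          ← ENNReal.ofReal_mul hd, ← ENNReal.ofReal_mul hb]
        ring_nf
    _ ≤ ENNReal.ofReal b * ∫⁻ t in Ioo 0 s, φ t * ν {y | g y < ENNReal.ofReal (s - t)} := by
        gcongr ENNReal.ofReal b * ?_
        refine setLIntegral_mono' measurableSet_Ioo fun t ht => mul_le_mul_right ?_ _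
        exact hg _ (sub_pos.2 ht.2)
          ((ENNReal.ofReal_le_ofReal (by linarith [ht.1])).trans_lt
            (hsδε.trans_le (min_le_right _ _)))
    _ = ∫⁻ y, ENNReal.ofReal b * (∫⁻ t in Ioo 0 s, F y t) ∂ν := by
        rw [lintegral_const_mul' _ _ ENNReal.ofReal_ne_top,
          lintegral_lintegral_swap hF_meas.aemeasurable]
        simp only [hF_int]
    _ ≤ _ := lintegral_mono fun y =>
        hf.setLIntegral_indicator_le_measure_add hm hb (hsδε.trans_le (min_le_left _ _)) (g y)

end IsSuperregular

theorem IsSuperregular.pi {n : ℕ} {Y : Fin n → Type*} [∀ i, MeasurableSpace (Y i)]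
    {ν : ∀ i, Measure (Y i)} [∀ i, SigmaFinite (ν i)] {g : ∀ i, Y i → ℝ≥0∞}
    {m b : Fin n → ℝ} {δ : Fin n → ℝ≥0∞} (h : ∀ i, IsSuperregular (ν i) (g i) (m i) (b i) (δ i))
    (hg : ∀ i, Measurable (g i)) (hm : ∀ i, 0 < m i) (hb : ∀ i, 0 ≤ b i) :
    IsSuperregular (Measure.pi ν) (fun y => ∑ i, g i (y i)) (∑ i, m i)
      ((∏ i, Real.Gamma (1 + m i)) / Real.Gamma (1 + ∑ i, m i) * ∏ i, b i) (⨅ i, δ i) := by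
  induction n with
  | zero =>
    intro t ht _
    simp [ht]
  | succ n ih =>
    set q := ∑ j : Fin n, m j.succ
    set d :=
      (∏ j : Fin n, Real.Gamma (1 + m j.succ)) / Real.Gamma (1 + q) * ∏ j : Fin n, b j.succ
    have hq : 0 ≤ q := Finset.sum_nonneg fun j _ => (hm j.succ).le
    have hd : 0 ≤ d := mul_nonneg (div_nonneg
      (Finset.prod_nonneg fun j _ => Real.Gamma_nonneg_of_nonneg (by linarith [hm j.succ]))
      (Real.Gamma_nonneg_of_nonneg (by linarith))) (Finset.prod_nonneg fun j _ => hb j.succ)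
    have htail : IsSuperregular (Measure.pi fun j : Fin n => ν j.succ)
        (fun y => ∑ j : Fin n, g j.succ (y j)) q d (⨅ j : Fin n, δ j.succ) :=
      ih (fun j => h j.succ) (fun j => hg j.succ) (fun j => hm j.succ) (fun j => hb j.succ)
    have hsplit := ((h 0).prod htail (hg 0) (by fun_prop) (hm 0) hq (hb 0) hd)
      |>.comp_measurePreserving (measurePreserving_piFinSuccAbove ν 0) (by fun_prop)
    have e_const :
        Real.Gamma (1 + m 0) * Real.Gamma (1 + q) / Real.Gamma (1 + m 0 + q) * (b 0 * d)
        = (∏ i, Real.Gamma (1 + m i)) / Real.Gamma (1 + ∑ i, m i) * ∏ i, b i := by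
      have := (Real.Gamma_pos_of_pos (by linarith : 0 < 1 + q)).ne'
      rw [Fin.prod_univ_succ, Fin.prod_univ_succ, Fin.sum_univ_succ, ← add_assoc]
      simp only [d]
      field_simp
      rfl
    convert hsplit.mono (le_min (iInf_le _ 0) (le_iInf fun j => iInf_le _ j.succ)) using 1
    · ext y
      rw [Fin.sum_univ_succ]
      rfl
    · exact Fin.sum_univ_succ m
    · exact e_const.symm

theorem superregular_pi_general
    {ℓ : ℕ}
    {X Y : Fin ℓ → Type*} [∀ i, MeasurableSpace (X i)] [∀ i, MeasurableSpace (Y i)]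
    (k : ℝ) (hk : 0 < k)
    (ρ : ∀ i, X i → Y i → ℝ≥0∞) (hρ : ∀ i, Measurable (Function.uncurry (ρ i)))
    (α : Fin ℓ → ℝ) (hα : ∀ i, 0 < α i)
    (ν : ∀ i, Measure (Y i)) [∀ i, SigmaFinite (ν i)]
    (m b : Fin ℓ → ℝ) (δ : Fin ℓ → ℝ≥0∞)
    (hm : ∀ i, 0 < m i) (hb : ∀ i, 0 < b i)
    (hsup : ∀ i, ∀ x : X i, ∀ t : ℝ, 0 < t → ENNReal.ofReal t < δ i →
      ENNReal.ofReal (b i * t ^ m i) ≤ (ν i) {y | (ρ i x y) ^ (1 / k) < ENNReal.ofReal t}) :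
    ∀ x : ∀ i, X i, ∀ t : ℝ, 0 < t →
      ENNReal.ofReal t < ⨅ i, ENNReal.ofReal (α i ^ (1 / k)) * δ i →
      ENNReal.ofReal
          ((∏ i, Real.Gamma (1 + m i / k)) / Real.Gamma (1 + ∑ i, m i / k) *
            (∏ i, b i * α i ^ (-(m i / k))) *
            t ^ (∑ i, m i)) ≤
        (Measure.pi ν)
          {y : ∀ i, Y i | (∑ i, ENNReal.ofReal (α i) * ρ i (x i) (y i)) ^ (1 / k)
            < ENNReal.ofReal t} := by
  intro x t ht hlt
  have hfactor : ∀ i, IsSuperregular (ν i) (fun y => ENNReal.ofReal (α i) * ρ i (x i) y) (m i / k)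
      (b i * α i ^ (-(m i / k))) (ENNReal.ofReal (α i) * δ i ^ k) := fun i => by
    simpa only [← ENNReal.rpow_mul, one_div_mul_cancel hk.ne', ENNReal.rpow_one] using
      ((IsSuperregular.rpow (f := fun y => ρ i (x i) y ^ (1 / k)) (hsup i (x i)) hk).const_mul
        (hα i))
  have hsum := IsSuperregular.pi hfactor
    (fun i => measurable_const.mul ((hρ i).comp measurable_prodMk_left))
    (fun i => div_pos (hm i) hk) (fun i => (mul_pos (hb i) (Real.rpow_pos_of_pos (hα i) _)).le)
  have hthreshold : ⨅ i, ENNReal.ofReal (α i ^ (1 / k)) * δ i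
      ≤ (⨅ i, ENNReal.ofReal (α i) * δ i ^ k) ^ (1 / k) := by
    rw [one_div, ENNReal.le_rpow_inv_iff hk]
    refine le_iInf fun i => (ENNReal.rpow_le_rpow (iInf_le _ i) hk.le).trans_eq ?_
    rw [ENNReal.mul_rpow_of_nonneg _ _ hk.le,
      ENNReal.ofReal_rpow_of_nonneg (Real.rpow_nonneg (hα i).le _) hk.le, ← Real.rpow_mul (hα i).le,
      inv_mul_cancel₀ hk.ne', Real.rpow_one]
  have hdim : ∑ i, m i = (∑ i, m i / k) / (1 / k) := by
    rw [← Finset.sum_div, div_div_eq_mul_div, div_one, div_mul_cancel₀ _ hk.ne']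
  rw [hdim]
  exact (hsum.rpow (one_div_pos.2 hk)).mono hthreshold t ht hlt

/-- Superregularity of the product measure `ν₁ ⊗ ⋯ ⊗ ν_ℓ` with respect to
the `1/k`-th power of the weighted distortion `ρ_{(ℓ)}(x,y) = Σᵢ αᵢ·ρᵢ(xᵢ,yᵢ)`, for
σ-finite measures `νᵢ` that are `ρᵢ^{1/k}`-superregular of dimension `mᵢ` with constants
`bᵢ, δᵢ`. -/
theorem superregular_pi
    {ℓ : ℕ} (hℓ : 0 < ℓ)
    {X Y : Fin ℓ → Type*} [∀ i, MeasurableSpace (X i)] [∀ i, MeasurableSpace (Y i)]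
    (k : ℝ) (hk : 0 < k)
    (ρ : ∀ i, X i → Y i → ℝ≥0∞) (hρ : ∀ i, Measurable (Function.uncurry (ρ i)))
    (α : Fin ℓ → ℝ) (hα : ∀ i, 0 < α i)
    (ν : ∀ i, Measure (Y i)) [∀ i, SigmaFinite (ν i)]
    (m b : Fin ℓ → ℝ) (δ : Fin ℓ → ℝ≥0∞)
    (hm : ∀ i, 0 < m i) (hb : ∀ i, 0 < b i) (hδ : ∀ i, 0 < δ i)
    (hsup : ∀ i, ∀ x : X i, ∀ t : ℝ, 0 < t → ENNReal.ofReal t < δ i →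
      ENNReal.ofReal (b i * t ^ m i) ≤ (ν i) {y | (ρ i x y) ^ (1 / k) < ENNReal.ofReal t}) :
    ∀ x : ∀ i, X i, ∀ t : ℝ, 0 < t →
      ENNReal.ofReal t < ⨅ i, ENNReal.ofReal (α i ^ (1 / k)) * δ i →
      ENNReal.ofReal
          ((∏ i, Real.Gamma (1 + m i / k)) / Real.Gamma (1 + ∑ i, m i / k) *
            (∏ i, b i * α i ^ (-(m i / k))) *
            t ^ (∑ i, m i)) ≤
        (Measure.pi ν)
          {y : ∀ i, Y i | (∑ i, ENNReal.ofReal (α i) * ρ i (x i) (y i)) ^ (1 / k)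
            < ENNReal.ofReal t} :=
  superregular_pi_general k hk ρ hρ α hα ν m b δ hm hb hsup
end

section
/- Let X be a random variable taking values in a σ-finite measure space (X,𝒳,μ) whose distribution μ_X satisfies μ_X ≪ μ and |h_μ(X)| < ∞, let (Y,𝒴) be a measurable space, and let ρ: X×Y → [0,∞] be a measurable distortion function. Define ν(s) = sup_{y∈Y} ∫ e^{-s·ρ(x,y)} dμ(x) for s ∈ [0,∞). Then for every D ∈ (0,∞) and every probability measure π on X×Y whose first marginal equals μ_X and which satisfies ∫ ρ dπ ≤ D, the Kullback–Leibler divergence of π with respect to the product of its marginals satisfies D_KL(π ‖ π₁ ⊗ π₂) ≥ h_μ(X) − inf_{s≥0}( s·D + log ν(s) ), where π₁ and π₂ denote the first and second marginals of π. -/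
open MeasureTheory
open scoped ENNReal Classical

/-- `e^{-t}` for `t ∈ [0,∞]`, with the convention `e^{-∞} = 0`. -/
noncomputable def expNeg (t : ℝ≥0∞) : ℝ≥0∞ :=
  if t = ∞ then 0 else ENNReal.ofReal (Real.exp (-t.toReal))

/-- The natural logarithm on `[0,∞]`, with values in the extended reals. -/
noncomputable def elog (x : ℝ≥0∞) : EReal :=
  if x = 0 then ⊥ else if x = ∞ then ⊤ else ((Real.log x.toReal : ℝ) : EReal)

/-- The Kullback–Leibler divergence `D_KL(π‖λ) = ∫ log(dπ/dλ) dπ` if `π ≪ λ` (and the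
integral makes sense), and `∞` otherwise. -/
noncomputable def klDivE {Z : Type*} [MeasurableSpace Z] (π lam : Measure Z) : EReal :=
  if π ≪ lam ∧ Integrable (fun z => Real.log ((π.rnDeriv lam z).toReal)) π then
    (((∫ z, Real.log ((π.rnDeriv lam z).toReal) ∂π : ℝ) : EReal))
  else ⊤

/-! Fix `s ≥ 0` and put `φ = -s ρ - log (dμX/dμ) - log (dπ/d(π₁ ⊗ π₂))` on `A × B`.
Cancelling the density `dπ/d(π₁ ⊗ π₂)`, then (by Tonelli, for each `y`) the density
`dμX/dμ`, gives `∫ e^φ dπ ≤ ν(s)`, so Jensen's inequality gives `∫ φ dπ ≤ log ν(s)`.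
On the other hand `∫ φ dπ ≥ -s D + h_μ(X) - D_KL(π ‖ π₁ ⊗ π₂)`, since `π₁ = μX` and
`∫ ρ dπ ≤ D`. -/

lemma measurable_expNeg : Measurable expNeg :=
  Measurable.ite measurableSet_eq measurable_const
    (ENNReal.measurable_ofReal.comp (Real.measurable_exp.comp ENNReal.measurable_toReal.neg))

lemma expNeg_ofReal_mul {s : ℝ} (hs : 0 ≤ s) {t : ℝ≥0∞} (ht : t ≠ ∞) :
    expNeg (ENNReal.ofReal s * t) = ENNReal.ofReal (Real.exp (-(s * t.toReal))) := by
  rw [expNeg, if_neg (ENNReal.mul_ne_top ENNReal.ofReal_ne_top ht), ENNReal.toReal_mul,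
    ENNReal.toReal_ofReal hs]

lemma ENNReal.ofReal_exp_neg_log_toReal {a : ℝ≥0∞} (h0 : a ≠ 0) (htop : a ≠ ∞) :
    ENNReal.ofReal (Real.exp (-Real.log a.toReal)) = a⁻¹ := by
  have ha : 0 < a.toReal := ENNReal.toReal_pos h0 htop
  rw [Real.exp_neg, Real.exp_log ha, ENNReal.ofReal_inv_of_pos ha, ENNReal.ofReal_toReal htop]

lemma integral_le_elog_of_lintegral_exp_le {Ω : Type*} [MeasurableSpace Ω] {π : Measure Ω}
    [IsProbabilityMeasure π] {φ : Ω → ℝ} (hφ : Integrable φ π) {c : ℝ≥0∞}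
    (hc : ∫⁻ z, ENNReal.ofReal (Real.exp (φ z)) ∂π ≤ c) :
    ((∫ z, φ z ∂π : ℝ) : EReal) ≤ elog c := by
  rcases eq_or_ne c ∞ with rfl | hctop
  · simp [elog]
  have hexp_meas : AEStronglyMeasurable (fun z => Real.exp (φ z)) π :=
    Real.continuous_exp.comp_aestronglyMeasurable hφ.aestronglyMeasurable
  have hexp_int : Integrable (fun z => Real.exp (φ z)) π := by
    refine ⟨hexp_meas, ?_⟩
    simpa only [hasFiniteIntegral_iff_ofReal (ae_of_all _ fun z => (Real.exp_pos _).le)]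
      using hc.trans_lt hctop.lt_top
  have hjensen : Real.exp (∫ z, φ z ∂π) ≤ ∫ z, Real.exp (φ z) ∂π :=
    convexOn_exp.map_integral_le Real.continuous_exp.continuousOn isClosed_univ
      (ae_of_all _ fun _ => Set.mem_univ _) hφ hexp_int
  have hexp_le : ∫ z, Real.exp (φ z) ∂π ≤ c.toReal := by
    rw [integral_eq_lintegral_of_nonneg_ae (ae_of_all _ fun z => (Real.exp_pos _).le)
      hexp_meas]
    exact ENNReal.toReal_mono hctop hc
  have hc_pos : 0 < c.toReal := (Real.exp_pos _).trans_le (hjensen.trans hexp_le)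
  rw [elog, if_neg (ENNReal.toReal_pos_iff.mp hc_pos).1.ne', if_neg hctop,
    EReal.coe_le_coe_iff, Real.le_log_iff_exp_le hc_pos]
  exact hjensen.trans hexp_le

lemma lintegral_mul_inv_rnDeriv_le {α : Type*} [MeasurableSpace α] {μ ν : Measure α}
    [μ.HaveLebesgueDecomposition ν] (hμν : μ ≪ ν) {g : α → ℝ≥0∞} (hg : AEMeasurable g ν) :
    ∫⁻ x, g x * (μ.rnDeriv ν x)⁻¹ ∂μ ≤ ∫⁻ x, g x ∂ν := by
  rw [← lintegral_rnDeriv_mul hμν (f := fun x => g x * (μ.rnDeriv ν x)⁻¹)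
    (hg.mul (μ.measurable_rnDeriv ν).inv.aemeasurable)]
  refine lintegral_mono fun x => ?_
  calc μ.rnDeriv ν x * (g x * (μ.rnDeriv ν x)⁻¹)
        = g x * (μ.rnDeriv ν x * (μ.rnDeriv ν x)⁻¹) := by ring
    _ ≤ g x := mul_le_of_le_one_right' (ENNReal.mul_inv_le_one _)

lemma integral_toReal_le_of_lintegral_le_ofReal {Ω : Type*} [MeasurableSpace Ω]
    {μ : Measure Ω} {f : Ω → ℝ≥0∞} (hf : AEMeasurable f μ) {D : ℝ} (hD : 0 ≤ D)
    (h : ∫⁻ x, f x ∂μ ≤ ENNReal.ofReal D) : ∫ x, (f x).toReal ∂μ ≤ D := by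
  have hfin : ∫⁻ x, f x ∂μ ≠ ∞ := ne_top_of_le_ne_top ENNReal.ofReal_ne_top h
  rw [integral_toReal hf (ae_lt_top' hf hfin), ← ENNReal.toReal_ofReal hD]
  exact ENNReal.toReal_mono ENNReal.ofReal_ne_top h

section

variable {A B : Type*} [MeasurableSpace A] [MeasurableSpace B]

lemma lintegral_prod_mul_inv_rnDeriv_le_iSup {μ μX : Measure A} [SigmaFinite μ]
    [SigmaFinite μX] (hac : μX ≪ μ) (κ : Measure B) [IsProbabilityMeasure κ] {g : A → B → ℝ≥0∞}
    (hg : Measurable (Function.uncurry g)) :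
    ∫⁻ z, g z.1 z.2 * (μX.rnDeriv μ z.1)⁻¹ ∂(μX.prod κ) ≤ ⨆ y, ∫⁻ x, g x y ∂μ :=
  calc ∫⁻ z, g z.1 z.2 * (μX.rnDeriv μ z.1)⁻¹ ∂(μX.prod κ)
      = ∫⁻ y, ∫⁻ x, g x y * (μX.rnDeriv μ x)⁻¹ ∂μX ∂κ :=
        lintegral_prod_symm _
          (hg.mul ((μX.measurable_rnDeriv μ).comp measurable_fst).inv).aemeasurable
    _ ≤ ∫⁻ _, ⨆ y, ∫⁻ x, g x y ∂μ ∂κ := lintegral_mono fun y =>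
        (lintegral_mul_inv_rnDeriv_le hac (hg.comp measurable_prodMk_right).aemeasurable).trans
          (le_iSup (fun y => ∫⁻ x, g x y ∂μ) y)
    _ = ⨆ y, ∫⁻ x, g x y ∂μ := by simp

variable {μ : Measure A} [SigmaFinite μ] {ρ : A → B → ℝ≥0∞} {π : Measure (A × B)}
  [IsProbabilityMeasure π]

lemma lintegral_exp_le_iSup_lintegral_expNeg (hac : π.fst ≪ μ)
    (hρ : Measurable (Function.uncurry ρ)) (hρ_fin : ∀ᵐ z ∂π, ρ z.1 z.2 ≠ ∞)
    (hπ_ac : π ≪ π.fst.prod π.snd) {s : ℝ} (hs : 0 ≤ s) :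
    ∫⁻ z, ENNReal.ofReal (Real.exp (-(s * (ρ z.1 z.2).toReal)
        - Real.log (π.fst.rnDeriv μ z.1).toReal
        - Real.log (π.rnDeriv (π.fst.prod π.snd) z).toReal)) ∂π
      ≤ ⨆ y, ∫⁻ x, expNeg (ENNReal.ofReal s * ρ x y) ∂μ := by
  set f := π.fst.rnDeriv μ
  set r := π.rnDeriv (π.fst.prod π.snd)
  have hf0 : ∀ᵐ z ∂π, 0 < f z.1 :=
    ae_of_ae_map measurable_fst.aemeasurable (Measure.rnDeriv_pos hac)
  have hf_top : ∀ᵐ z ∂π, f z.1 < ∞ :=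
    ae_of_ae_map measurable_fst.aemeasurable (hac.ae_le (Measure.rnDeriv_lt_top π.fst μ))
  have hr0 : ∀ᵐ z ∂π, 0 < r z := Measure.rnDeriv_pos hπ_ac
  have hr_top : ∀ᵐ z ∂π, r z < ∞ :=
    hπ_ac.ae_le (Measure.rnDeriv_lt_top π (π.fst.prod π.snd))
  have hmeas :
      Measurable fun z : A × B => expNeg (ENNReal.ofReal s * ρ z.1 z.2) * (f z.1)⁻¹ :=
    (measurable_expNeg.comp (hρ.const_mul _)).mul
      ((π.fst.measurable_rnDeriv μ).comp measurable_fst).inv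
  calc _ = ∫⁻ z, expNeg (ENNReal.ofReal s * ρ z.1 z.2) * (f z.1)⁻¹ * (r z)⁻¹ ∂π := by
        refine lintegral_congr_ae ?_
        filter_upwards [hρ_fin, hf0, hf_top, hr0, hr_top]
          with z hρz hf0z hf_topz hr0z hr_topz
        rw [sub_eq_add_neg, sub_eq_add_neg, Real.exp_add, Real.exp_add,
          ENNReal.ofReal_mul (by positivity), ENNReal.ofReal_mul (by positivity),
          ← expNeg_ofReal_mul hs hρz, ENNReal.ofReal_exp_neg_log_toReal hf0z.ne' hf_topz.ne,
          ENNReal.ofReal_exp_neg_log_toReal hr0z.ne' hr_topz.ne]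
    _ ≤ ∫⁻ z, expNeg (ENNReal.ofReal s * ρ z.1 z.2) * (f z.1)⁻¹ ∂(π.fst.prod π.snd) :=
        lintegral_mul_inv_rnDeriv_le hπ_ac hmeas.aemeasurable
    _ ≤ ⨆ y, ∫⁻ x, expNeg (ENNReal.ofReal s * ρ x y) ∂μ :=
        lintegral_prod_mul_inv_rnDeriv_le_iSup hac π.snd
          (measurable_expNeg.comp (hρ.const_mul _))

lemma neg_entropy_sub_klDiv_le (hac : π.fst ≪ μ)
    (hent : Integrable (fun x => Real.log (π.fst.rnDeriv μ x).toReal) π.fst)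
    (hρ : Measurable (Function.uncurry ρ)) {D : ℝ} (hD : 0 ≤ D)
    (hdist : ∫⁻ p, ρ p.1 p.2 ∂π ≤ ENNReal.ofReal D) (hπ_ac : π ≪ π.fst.prod π.snd)
    (hK : Integrable (fun z => Real.log (π.rnDeriv (π.fst.prod π.snd) z).toReal) π)
    {s : ℝ} (hs : 0 ≤ s) :
    ((-(∫ x, Real.log (π.fst.rnDeriv μ x).toReal ∂π.fst)
        - ∫ z, Real.log (π.rnDeriv (π.fst.prod π.snd) z).toReal ∂π : ℝ) : EReal)
      ≤ ((s * D : ℝ) : EReal) + elog (⨆ y, ∫⁻ x, expNeg (ENNReal.ofReal s * ρ x y) ∂μ) := by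
  set I := ∫ x, Real.log (π.fst.rnDeriv μ x).toReal ∂π.fst
  set K := ∫ z, Real.log (π.rnDeriv (π.fst.prod π.snd) z).toReal ∂π
  set σ := ∫ z, (ρ z.1 z.2).toReal ∂π
  have hρ_lint : ∫⁻ p, ρ p.1 p.2 ∂π ≠ ∞ := ne_top_of_le_ne_top ENNReal.ofReal_ne_top hdist
  have hρ_int : Integrable (fun z => (ρ z.1 z.2).toReal) π :=
    integrable_toReal_of_lintegral_ne_top hρ.aemeasurable hρ_lint
  have hlogf_int : Integrable (fun z : A × B => Real.log (π.fst.rnDeriv μ z.1).toReal) π :=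
    hent.comp_measurable measurable_fst
  have hlogf_integral : ∫ z, Real.log (π.fst.rnDeriv μ z.1).toReal ∂π = I :=
    (integral_map measurable_fst.aemeasurable hent.aestronglyMeasurable).symm
  have hφ_int : Integrable (fun z => -(s * (ρ z.1 z.2).toReal)
      - Real.log (π.fst.rnDeriv μ z.1).toReal
      - Real.log (π.rnDeriv (π.fst.prod π.snd) z).toReal) π :=
    ((hρ_int.const_mul s).neg.sub hlogf_int).sub hK
  have hφ_integral : ∫ z, (-(s * (ρ z.1 z.2).toReal) - Real.log (π.fst.rnDeriv μ z.1).toReal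
      - Real.log (π.rnDeriv (π.fst.prod π.snd) z).toReal) ∂π = -(s * σ) - I - K := by
    rw [integral_sub _ hK, integral_sub _ hlogf_int, integral_neg, integral_const_mul,
      hlogf_integral]
    · exact (hρ_int.const_mul s).neg
    · exact (hρ_int.const_mul s).neg.sub hlogf_int
  have hgibbs := integral_le_elog_of_lintegral_exp_le hφ_int
    (lintegral_exp_le_iSup_lintegral_expNeg hac hρ
      ((ae_lt_top hρ hρ_lint).mono fun _ => ne_of_lt) hπ_ac hs)
  have hσ : s * σ ≤ s * D := mul_le_mul_of_nonneg_left
    (integral_toReal_le_of_lintegral_le_ofReal hρ.aemeasurable hD hdist) hs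
  calc ((-I - K : ℝ) : EReal)
        ≤ ((s * D : ℝ) : EReal) + ((-(s * σ) - I - K : ℝ) : EReal) := by
        rw [← EReal.coe_add, EReal.coe_le_coe_iff]
        linarith
    _ ≤ _ := by
        rw [← hφ_integral]
        exact add_le_add le_rfl hgibbs

end

theorem klDiv_lower_bound_general
    {A B : Type*} [MeasurableSpace A] [MeasurableSpace B]
    (μ : Measure A) [SigmaFinite μ] (μX : Measure A)
    (hac : μX ≪ μ)
    (hent : Integrable (fun x => Real.log ((μX.rnDeriv μ x).toReal)) μX)
    (ρ : A → B → ℝ≥0∞) (hρ : Measurable (Function.uncurry ρ))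
    (D : ℝ) (hD : 0 < D)
    (π : Measure (A × B)) [IsProbabilityMeasure π]
    (hfst : π.fst = μX)
    (hdist : ∫⁻ p, ρ p.1 p.2 ∂π ≤ ENNReal.ofReal D) :
    ((-(∫ x, Real.log ((μX.rnDeriv μ x).toReal) ∂μX) : ℝ) : EReal)
      - sInf {e : EReal | ∃ s : ℝ, 0 ≤ s ∧
          e = ((s * D : ℝ) : EReal)
            + elog (⨆ y : B, ∫⁻ x, expNeg (ENNReal.ofReal s * ρ x y) ∂μ)}
      ≤ klDivE π (π.fst.prod π.snd) := by
  subst hfst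
  unfold klDivE
  split_ifs with h
  · obtain ⟨hπ_ac, hK⟩ := h
    set I := ∫ x, Real.log (π.fst.rnDeriv μ x).toReal ∂π.fst
    set K := ∫ z, Real.log (π.rnDeriv (π.fst.prod π.snd) z).toReal ∂π
    have hbound : ((-I - K : ℝ) : EReal) ≤ sInf {e : EReal | ∃ s : ℝ, 0 ≤ s ∧
        e = ((s * D : ℝ) : EReal)
          + elog (⨆ y, ∫⁻ x, expNeg (ENNReal.ofReal s * ρ x y) ∂μ)} :=
      le_sInf fun _ ⟨_, hs, he⟩ =>
        he ▸ neg_entropy_sub_klDiv_le hac hent hρ hD.le hdist hπ_ac hK hs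
    calc ((-I : ℝ) : EReal) - sInf _ ≤ ((-I : ℝ) : EReal) - ((-I - K : ℝ) : EReal) :=
          EReal.sub_le_sub le_rfl hbound
      _ = (K : EReal) := by rw [← EReal.coe_sub, sub_sub_cancel]
  · exact le_top

/-- Shannon-type lower bound on the rate-distortion function: for every
probability measure `π` on `X × Y` with first marginal `μ_X` and expected distortion at
most `D`, `D_KL(π ‖ π₁ ⊗ π₂) ≥ h_μ(X) − inf_{s ≥ 0}(s·D + log ν(s))`, where
`ν(s) = sup_y ∫ e^{-s·ρ(x,y)} dμ(x)` and `h_μ(X) = −∫ log (dμ_X/dμ) dμ_X`. -/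
theorem klDiv_lower_bound
    {A B : Type*} [MeasurableSpace A] [MeasurableSpace B]
    (μ : Measure A) [SigmaFinite μ] (μX : Measure A) [IsProbabilityMeasure μX]
    (hac : μX ≪ μ)
    (hent : Integrable (fun x => Real.log ((μX.rnDeriv μ x).toReal)) μX)
    (ρ : A → B → ℝ≥0∞) (hρ : Measurable (Function.uncurry ρ))
    (D : ℝ) (hD : 0 < D)
    (π : Measure (A × B)) [IsProbabilityMeasure π]
    (hfst : π.fst = μX)
    (hdist : ∫⁻ p, ρ p.1 p.2 ∂π ≤ ENNReal.ofReal D) :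
    ((-(∫ x, Real.log ((μX.rnDeriv μ x).toReal) ∂μX) : ℝ) : EReal)
      - sInf {e : EReal | ∃ s : ℝ, 0 ≤ s ∧
          e = ((s * D : ℝ) : EReal)
            + elog (⨆ y : B, ∫⁻ x, expNeg (ENNReal.ofReal s * ρ x y) ∂μ)}
      ≤ klDivE π (π.fst.prod π.snd) :=
  klDiv_lower_bound_general μ μX hac hent ρ hρ D hD π hfst hdist
end

section
/- Let X be a random variable taking values in a σ-finite measure space (X,𝒳,μ) whose distribution μ_X satisfies μ_X ≪ μ and |h_μ(X)| < ∞, let (Y,𝒴) be a measurable space, and let ρ: X×Y → [0,∞] be a measurable distortion function. Let k ∈ (0,∞) and suppose μ is ρ^{1/k}-subregular of dimension m ∈ (0,∞) with subregularity constants c ∈ (0,∞) and δ₀ ∈ (0,∞), and that μ(X) = 1. Define R_X^L(D) = h_μ(X) − m/k − log( c·(m/(kD))^{-m/k}·Γ(1+m/k) + e^{-m·δ₀^k/(kD)} ). Then: (a) the Shannon-type lower bound R_X^{SLB}(D) = h_μ(X) − inf_{s≥0}( s·D + log( sup_{y∈Y} ∫ e^{-s·ρ(x,y)} dμ(x) )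 ) satisfies R_X^{SLB}(D) ≥ R_X^L(D) for all D ∈ (0,∞); (b) R_X^L(D) < h_μ(X) + F_{m,k,c}(D) for all D ∈ (0,∞); and (c) lim_{D→0} ( R_X^L(D) − h_μ(X) − F_{m,k,c}(D) ) = 0, where F_{m,k,c}(D) = log( (m/(kD))^{m/k} / (c·Γ(1+m/k)) ) − m/k. -/
open MeasureTheory Filter Topology
open scoped ENNReal Classical

/-- The Shannon lower bound `R_X^{SLB}(D) = h − inf_{s≥0}(s·D + log ν(s))`, where
`ν(s) = sup_y ∫ e^{-s·ρ(x,y)} dμ(x)` and `h` stands for the generalized entropy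
`h_μ(X)`. -/
noncomputable def RSLB {X Y : Type*} [MeasurableSpace X] [MeasurableSpace Y]
    (μ : Measure X) (ρ : X → Y → ℝ≥0∞) (h D : ℝ) : EReal :=
  ((h : ℝ) : EReal)
    - sInf {e : EReal | ∃ s : ℝ, 0 ≤ s ∧
        e = ((s * D : ℝ) : EReal)
          + elog (⨆ y : Y, ∫⁻ x, expNeg (ENNReal.ofReal s * ρ x y) ∂μ)}

/-- `F_{m,k,c}(D) = log((m/(kD))^{m/k}/(c·Γ(1+m/k))) − m/k`. -/
noncomputable def Fmkc (m k c D : ℝ) : ℝ :=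
  Real.log ((m / (k * D)) ^ (m / k) / (c * Real.Gamma (1 + m / k))) - m / k

/-- The explicit lower bound
`R_X^L(D) = h − m/k − log(c·(m/(kD))^{-m/k}·Γ(1+m/k) + e^{-m·δ₀^k/(kD)})`, where `h`
stands for the generalized entropy `h_μ(X)`. -/
noncomputable def RL (h m k c δ₀ D : ℝ) : ℝ :=
  h - m / k
    - Real.log (c * (m / (k * D)) ^ (-(m / k)) * Real.Gamma (1 + m / k)
        + Real.exp (-(m * δ₀ ^ k / (k * D))))

/-! Since `e^{-s r} = ∫_{u > r} s e^{-s u} du`, Tonelli gives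
`∫ e^{-s ρ(x,y)} dμ(x) = ∫ s e^{-s u} μ{ρ(·,y) < u} du`. Subregularity bounds `μ{ρ(·,y) < u}` by
`c u^{m/k}` for `u < δ₀^k`, and it is at most `1` anyway, so the integral is at most
`c s^{-m/k} Γ(1+m/k) + e^{-s δ₀^k}`; the choice `s = m/(kD)` in the infimum defining `R^{SLB}`
gives (a). Moreover `R^L − h − F = −log(1 + (m/(kD))^{m/k} e^{-δ₀^k m/(kD)} / (c Γ(1+m/k)))`,
which is negative and tends to `0` as `D → 0`, since exponential decay beats polynomial growth. -/

open Set

lemma lintegral_Ioi_ofReal_mul_exp_neg_mul {s : ℝ} (hs : 0 < s) (b : ℝ) :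
    ∫⁻ u in Ioi b, ENNReal.ofReal (s * Real.exp (-(s * u))) =
      ENNReal.ofReal (Real.exp (-(s * b))) := by
  have hexp : ∀ u : ℝ, Real.exp (-(s * u)) = Real.exp (-s * u) := fun u => by rw [neg_mul]
  simp_rw [hexp]
  rw [← ofReal_integral_eq_lintegral_ofReal
    ((integrableOn_exp_mul_Ioi (neg_neg_of_pos hs) b).const_mul s)
    (ae_of_all _ fun u => by positivity), integral_const_mul,
    integral_exp_mul_Ioi (neg_neg_of_pos hs)]
  congr 1
  field_simp

lemma expNeg_ofReal_mul_eq_setLIntegral {s : ℝ} (hs : 0 < s) (r : ℝ≥0∞) :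
    expNeg (ENNReal.ofReal s * r) =
      ∫⁻ u in {u : ℝ | r < ENNReal.ofReal u}, ENNReal.ofReal (s * Real.exp (-(s * u))) := by
  rcases eq_or_ne r ∞ with rfl | hr
  · simp [expNeg, ENNReal.mul_top (ENNReal.ofReal_pos.mpr hs).ne']
  have hset : {u : ℝ | r < ENNReal.ofReal u} = Ioi r.toReal := by
    ext u
    exact ENNReal.lt_ofReal_iff_toReal_lt hr
  rw [hset, lintegral_Ioi_ofReal_mul_exp_neg_mul hs, expNeg,
    if_neg (ENNReal.mul_ne_top ENNReal.ofReal_ne_top hr), ENNReal.toReal_mul,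
    ENNReal.toReal_ofReal hs.le]

lemma lintegral_Ioi_rpow_mul_exp_neg_mul {a s : ℝ} (ha : -1 < a) (hs : 0 < s) :
    ∫⁻ u in Ioi 0, ENNReal.ofReal (u ^ a * (s * Real.exp (-(s * u)))) =
      ENNReal.ofReal (s ^ (-a) * Real.Gamma (1 + a)) := by
  have ha1 : 0 < a + 1 := by linarith
  have hI := Real.integral_rpow_mul_exp_neg_mul_Ioi ha1 hs
  rw [add_sub_cancel_right] at hI
  have hne : ∫ u in Ioi 0, u ^ a * Real.exp (-(s * u)) ≠ 0 := by
    rw [hI]; exact (mul_pos (by positivity) (Real.Gamma_pos_of_pos ha1)).ne'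
  have hcomm : ∀ u : ℝ, u ^ a * (s * Real.exp (-(s * u))) =
      s * (u ^ a * Real.exp (-(s * u))) := fun u => by ring
  simp_rw [hcomm]
  rw [← ofReal_integral_eq_lintegral_ofReal ((Integrable.of_integral_ne_zero hne).const_mul s)
    (by filter_upwards [ae_restrict_mem measurableSet_Ioi] with u hu
        exact mul_nonneg hs.le (mul_nonneg (Real.rpow_nonneg hu.le a) (Real.exp_pos _).le)),
    integral_const_mul, hI, add_comm 1 a, Real.div_rpow zero_le_one hs.le, Real.one_rpow,
    Real.rpow_neg hs.le, Real.rpow_add hs, Real.rpow_one]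
  congr 1
  field_simp

lemma lintegral_expNeg_ofReal_mul_eq {X : Type*} [MeasurableSpace X] (μ : Measure X) [SFinite μ]
    {r : X → ℝ≥0∞} (hr : Measurable r) {s : ℝ} (hs : 0 < s) :
    ∫⁻ x, expNeg (ENNReal.ofReal s * r x) ∂μ =
      ∫⁻ u, μ {x | r x < ENNReal.ofReal u} * ENNReal.ofReal (s * Real.exp (-(s * u))) := by
  set S : Set (X × ℝ) := {p | r p.1 < ENNReal.ofReal p.2}
  have hS : MeasurableSet S :=
    measurableSet_lt (hr.comp measurable_fst) (ENNReal.measurable_ofReal.comp measurable_snd)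
  set w : ℝ → ℝ≥0∞ := fun u => ENNReal.ofReal (s * Real.exp (-(s * u)))
  have hw : Measurable w := by unfold w; fun_prop
  calc ∫⁻ x, expNeg (ENNReal.ofReal s * r x) ∂μ
      = ∫⁻ x, (∫⁻ u, S.indicator (fun p => w p.2) (x, u)) ∂μ := by
        refine lintegral_congr fun x => ?_
        rw [expNeg_ofReal_mul_eq_setLIntegral hs,
          ← lintegral_indicator (measurableSet_lt measurable_const ENNReal.measurable_ofReal)]
        rfl
    _ = ∫⁻ u, ∫⁻ x, S.indicator (fun p => w p.2) (x, u) ∂μ :=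
        lintegral_lintegral_swap (((hw.comp measurable_snd).indicator hS).aemeasurable)
    _ = ∫⁻ u, μ {x | r x < ENNReal.ofReal u} * w u := by
        refine lintegral_congr fun u => ?_
        rw [mul_comm, ← lintegral_indicator_const (measurableSet_lt hr measurable_const)]
        rfl

lemma measure_lt_ofReal_le_of_subregular {X : Type*} [MeasurableSpace X] {μ : Measure X}
    {r : X → ℝ≥0∞} {k m c δ₀ : ℝ} (hk : 0 < k) (hδ₀ : 0 ≤ δ₀)
    (hsub : ∀ t : ℝ, 0 < t → t < δ₀ →
      μ {x | (r x) ^ (1 / k) < ENNReal.ofReal t} ≤ ENNReal.ofReal (c * t ^ m))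
    {u : ℝ} (hu : 0 < u) (huδ : u < δ₀ ^ k) :
    μ {x | r x < ENNReal.ofReal u} ≤ ENNReal.ofReal (c * u ^ (m / k)) := by
  have hset : {x | r x < ENNReal.ofReal u} =
      {x | (r x) ^ (1 / k) < ENNReal.ofReal (u ^ (1 / k))} := by
    ext x
    rw [mem_ofPred_eq, mem_ofPred_eq, ← ENNReal.ofReal_rpow_of_pos hu,
      ENNReal.rpow_lt_rpow_iff (by positivity)]
  have ht : u ^ (1 / k) < δ₀ := by
    rwa [one_div, Real.rpow_inv_lt_iff_of_pos hu.le hδ₀ hk]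
  have hpow : (u ^ (1 / k)) ^ m = u ^ (m / k) := by
    rw [← Real.rpow_mul hu.le, one_div_mul_eq_div]
  rw [hset, ← hpow]
  exact hsub _ (by positivity) ht

lemma lintegral_expNeg_le_of_subregular {X : Type*} [MeasurableSpace X] {μ : Measure X}
    [IsZeroOrProbabilityMeasure μ] {r : X → ℝ≥0∞} (hr : Measurable r) {k m c δ₀ s : ℝ}
    (hk : 0 < k) (hm : 0 ≤ m) (hc : 0 ≤ c) (hδ₀ : 0 ≤ δ₀)
    (hsub : ∀ t : ℝ, 0 < t → t < δ₀ →
      μ {x | (r x) ^ (1 / k) < ENNReal.ofReal t} ≤ ENNReal.ofReal (c * t ^ m))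
    (hs : 0 < s) :
    ∫⁻ x, expNeg (ENNReal.ofReal s * r x) ∂μ ≤
      ENNReal.ofReal (c * s ^ (-(m / k)) * Real.Gamma (1 + m / k) + Real.exp (-(s * δ₀ ^ k))) := by
  set w : ℝ → ℝ≥0∞ := fun u => ENNReal.ofReal (s * Real.exp (-(s * u)))
  set g : ℝ → ℝ≥0∞ := fun u => ENNReal.ofReal (u ^ (m / k) * (s * Real.exp (-(s * u))))
  have hbound : ∀ u, μ {x | r x < ENNReal.ofReal u} * w u ≤
      ENNReal.ofReal c * (Ioi 0).indicator g u + (Ici (δ₀ ^ k)).indicator w u := by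
    intro u
    rcases le_or_gt u 0 with hu | hu
    · simp [ENNReal.ofReal_of_nonpos hu]
    rcases lt_or_ge u (δ₀ ^ k) with huδ | huδ
    · rw [indicator_of_mem (mem_Ioi.mpr hu)]
      refine le_add_right ?_
      calc μ {x | r x < ENNReal.ofReal u} * w u
          ≤ ENNReal.ofReal (c * u ^ (m / k)) * w u := by
            gcongr
            exact measure_lt_ofReal_le_of_subregular hk hδ₀ hsub hu huδ
        _ = ENNReal.ofReal c * g u := by
            rw [ENNReal.ofReal_mul hc, mul_assoc, ← ENNReal.ofReal_mul (by positivity)]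
    · rw [indicator_of_mem (mem_Ici.mpr huδ)]
      exact le_add_left (mul_le_of_le_one_left' prob_le_one)
  have hg : Measurable g := by unfold g; fun_prop
  calc ∫⁻ x, expNeg (ENNReal.ofReal s * r x) ∂μ
      = ∫⁻ u, μ {x | r x < ENNReal.ofReal u} * w u := lintegral_expNeg_ofReal_mul_eq μ hr hs
    _ ≤ ∫⁻ u, ENNReal.ofReal c * (Ioi 0).indicator g u + (Ici (δ₀ ^ k)).indicator w u :=
        lintegral_mono hbound
    _ = ENNReal.ofReal c * (∫⁻ u in Ioi 0, g u) + ∫⁻ u in Ioi (δ₀ ^ k), w u := by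
        rw [lintegral_add_left ((hg.indicator measurableSet_Ioi).const_mul _),
          lintegral_const_mul _ (hg.indicator measurableSet_Ioi),
          lintegral_indicator measurableSet_Ioi, lintegral_indicator measurableSet_Ici,
          setLIntegral_congr (Ioi_ae_eq_Ici (a := δ₀ ^ k))]
    _ = _ := by
        simp only [g, w]
        rw [lintegral_Ioi_rpow_mul_exp_neg_mul (by linarith [div_nonneg hm hk.le]) hs,
          lintegral_Ioi_ofReal_mul_exp_neg_mul hs, ← ENNReal.ofReal_mul hc,
          ← ENNReal.ofReal_add (by positivity) (by positivity), mul_assoc]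

lemma elog_le_log {x : ℝ≥0∞} {w : ℝ} (hw : 0 < w) (hx : x ≤ ENNReal.ofReal w) :
    elog x ≤ ((Real.log w : ℝ) : EReal) := by
  rcases eq_or_ne x 0 with rfl | hx0
  · simp [elog]
  have hxt : x ≠ ∞ := ne_top_of_le_ne_top ENNReal.ofReal_ne_top hx
  rw [elog, if_neg hx0, if_neg hxt, EReal.coe_le_coe_iff]
  exact Real.log_le_log (ENNReal.toReal_pos hx0 hxt) (ENNReal.toReal_le_of_le_ofReal hw.le hx)

lemma RL_le_RSLB {X Y : Type*} [MeasurableSpace X] [MeasurableSpace Y] {μ : Measure X}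
    [IsZeroOrProbabilityMeasure μ] {ρ : X → Y → ℝ≥0∞} (hρ : ∀ y, Measurable fun x => ρ x y)
    {k m c δ₀ : ℝ} (hk : 0 < k) (hm : 0 < m) (hc : 0 ≤ c) (hδ₀ : 0 ≤ δ₀)
    (hsub : ∀ y : Y, ∀ t : ℝ, 0 < t → t < δ₀ →
      μ {x | (ρ x y) ^ (1 / k) < ENNReal.ofReal t} ≤ ENNReal.ofReal (c * t ^ m))
    (h : ℝ) {D : ℝ} (hD : 0 < D) :
    ((RL h m k c δ₀ D : ℝ) : EReal) ≤ RSLB μ ρ h D := by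
  set s := m / (k * D) with hs_def
  have hs : 0 < s := by positivity
  set W := c * s ^ (-(m / k)) * Real.Gamma (1 + m / k) + Real.exp (-(m * δ₀ ^ k / (k * D)))
  have hW : 0 < W := by positivity
  have hbound : (⨆ y : Y, ∫⁻ x, expNeg (ENNReal.ofReal s * ρ x y) ∂μ) ≤ ENNReal.ofReal W := by
    refine iSup_le fun y => (lintegral_expNeg_le_of_subregular (hρ y) hk hm.le hc hδ₀
      (hsub y) hs).trans_eq ?_
    rw [hs_def, div_mul_eq_mul_div]
  have hmem : ((s * D : ℝ) : EReal) + elog (⨆ y : Y, ∫⁻ x, expNeg (ENNReal.ofReal s * ρ x y) ∂μ)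
      ∈ {e : EReal | ∃ s : ℝ, 0 ≤ s ∧ e = ((s * D : ℝ) : EReal)
          + elog (⨆ y : Y, ∫⁻ x, expNeg (ENNReal.ofReal s * ρ x y) ∂μ)} := ⟨s, hs.le, rfl⟩
  have hinf := (sInf_le hmem).trans (add_le_add le_rfl (elog_le_log hW hbound))
  rw [RSLB]
  refine le_trans ?_ (EReal.sub_le_sub le_rfl hinf)
  have hsD : s * D = m / k := by rw [hs_def]; field_simp
  rw [← EReal.coe_add, ← EReal.coe_sub, EReal.coe_le_coe_iff, hsD, RL]
  simp only [W, s]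
  linarith

lemma RL_sub_sub_Fmkc_eq (h : ℝ) {m k c δ₀ D : ℝ} (hm : 0 < m) (hk : 0 < k) (hc : 0 < c)
    (hD : 0 < D) :
    RL h m k c δ₀ D - h - Fmkc m k c D = -Real.log (1 +
      (m / (k * D)) ^ (m / k) * Real.exp (-δ₀ ^ k * (m / (k * D))) /
        (c * Real.Gamma (1 + m / k))) := by
  set v := m / (k * D)
  have hv : 0 < v := by positivity
  have hexp : m * δ₀ ^ k / (k * D) = δ₀ ^ k * v := by ring
  have hprod : (c * v ^ (-(m / k)) * Real.Gamma (1 + m / k) + Real.exp (-(δ₀ ^ k * v))) *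
      (v ^ (m / k) / (c * Real.Gamma (1 + m / k))) =
      1 + v ^ (m / k) * Real.exp (-δ₀ ^ k * v) / (c * Real.Gamma (1 + m / k)) := by
    rw [Real.rpow_neg hv.le, neg_mul]
    field_simp
  rw [RL, Fmkc, hexp, ← hprod, Real.log_mul (by positivity) (by positivity)]
  ring

lemma RL_lt_add_Fmkc (h : ℝ) {m k c δ₀ D : ℝ} (hm : 0 < m) (hk : 0 < k) (hc : 0 < c)
    (hD : 0 < D) : RL h m k c δ₀ D < h + Fmkc m k c D := by
  have hlog : 0 < Real.log (1 + (m / (k * D)) ^ (m / k) * Real.exp (-δ₀ ^ k * (m / (k * D))) /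
      (c * Real.Gamma (1 + m / k))) :=
    Real.log_pos (lt_add_of_pos_right _ (by positivity))
  linarith [RL_sub_sub_Fmkc_eq h (δ₀ := δ₀) hm hk hc hD]

lemma tendsto_RL_sub_sub_Fmkc (h : ℝ) {m k c δ₀ : ℝ} (hm : 0 < m) (hk : 0 < k) (hc : 0 < c)
    (hδ₀ : 0 < δ₀) :
    Tendsto (fun D : ℝ => RL h m k c δ₀ D - h - Fmkc m k c D) (𝓝[>] 0) (𝓝 0) := by
  have hv : Tendsto (fun D : ℝ => m / (k * D)) (𝓝[>] 0) atTop := by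
    refine (tendsto_inv_nhdsGT_zero.const_mul_atTop (div_pos hm hk)).congr fun D => ?_
    field_simp
  have hdecay : Tendsto (fun D : ℝ => (m / (k * D)) ^ (m / k) *
      Real.exp (-δ₀ ^ k * (m / (k * D))) / (c * Real.Gamma (1 + m / k))) (𝓝[>] 0) (𝓝 0) := by
    simpa using ((tendsto_rpow_mul_exp_neg_mul_atTop_nhds_zero _ _ (by positivity)).comp
      hv).div_const (c * Real.Gamma (1 + m / k))
  have hlim := ((hdecay.const_add 1).log (by norm_num)).neg
  rw [add_zero, Real.log_one, neg_zero] at hlim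
  refine hlim.congr' ?_
  filter_upwards [self_mem_nhdsWithin] with D hD
  exact (RL_sub_sub_Fmkc_eq h hm hk hc hD).symm

theorem RSLB_ge_RL_of_subregular_general
    {X Y : Type*} [MeasurableSpace X] [MeasurableSpace Y]
    (μ : Measure X) [IsProbabilityMeasure μ]
    (ρ : X → Y → ℝ≥0∞) (hρ : Measurable (Function.uncurry ρ))
    (k m c δ₀ : ℝ) (hk : 0 < k) (hm : 0 < m) (hc : 0 < c) (hδ₀ : 0 < δ₀)
    (hsub : ∀ y : Y, ∀ t : ℝ, 0 < t → t < δ₀ →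
      μ {x | (ρ x y) ^ (1 / k) < ENNReal.ofReal t} ≤ ENNReal.ofReal (c * t ^ m))
    (h : ℝ) :
    (∀ D : ℝ, 0 < D → ((RL h m k c δ₀ D : ℝ) : EReal) ≤ RSLB μ ρ h D) ∧
    (∀ D : ℝ, 0 < D → RL h m k c δ₀ D < h + Fmkc m k c D) ∧
    Tendsto (fun D : ℝ => RL h m k c δ₀ D - h - Fmkc m k c D) (𝓝[>] 0) (𝓝 0) :=
  ⟨fun _ hD => RL_le_RSLB (fun _ => hρ.of_uncurry_right) hk hm hc.le hδ₀.le hsub h hD,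
    fun _ hD => RL_lt_add_Fmkc h hm hk hc hD,
    tendsto_RL_sub_sub_Fmkc h hm hk hc hδ₀⟩

/-- If `μ` is a probability measure, `μ_X ≪ μ` with finite generalized
entropy `h = h_μ(X)`, and `μ` is `ρ^{1/k}`-subregular of dimension `m` with constants
`c ∈ (0,∞)` and `δ₀ ∈ (0,∞)`, then (a) `R_X^{SLB}(D) ≥ R_X^L(D)` for all `D ∈ (0,∞)`;
(b) `R_X^L(D) < h + F_{m,k,c}(D)` for all `D ∈ (0,∞)`; and
(c) `R_X^L(D) − h − F_{m,k,c}(D) → 0` as `D → 0⁺`. -/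
theorem RSLB_ge_RL_of_subregular
    {X Y : Type*} [MeasurableSpace X] [MeasurableSpace Y]
    (μ : Measure X) [IsProbabilityMeasure μ] (μX : Measure X) [IsProbabilityMeasure μX]
    (hac : μX ≪ μ)
    (hent : Integrable (fun x => Real.log ((μX.rnDeriv μ x).toReal)) μX)
    (ρ : X → Y → ℝ≥0∞) (hρ : Measurable (Function.uncurry ρ))
    (k m c δ₀ : ℝ) (hk : 0 < k) (hm : 0 < m) (hc : 0 < c) (hδ₀ : 0 < δ₀)
    (hsub : ∀ y : Y, ∀ t : ℝ, 0 < t → t < δ₀ →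
      μ {x | (ρ x y) ^ (1 / k) < ENNReal.ofReal t} ≤ ENNReal.ofReal (c * t ^ m))
    (h : ℝ) (hh : h = -(∫ x, Real.log ((μX.rnDeriv μ x).toReal) ∂μX)) :
    (∀ D : ℝ, 0 < D → ((RL h m k c δ₀ D : ℝ) : EReal) ≤ RSLB μ ρ h D) ∧
    (∀ D : ℝ, 0 < D → RL h m k c δ₀ D < h + Fmkc m k c D) ∧
    Tendsto (fun D : ℝ => RL h m k c δ₀ D - h - Fmkc m k c D) (𝓝[>] 0) (𝓝 0) :=
  RSLB_ge_RL_of_subregular_general μ ρ hρ k m c δ₀ hk hm hc hδ₀ hsub h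
end

section
/- Let X be a random variable taking values in a σ-finite measure space (X,𝒳,μ) whose distribution μ_X satisfies μ_X ≪ μ and |h_μ(X)| < ∞, let (Y,𝒴) be a measurable space, and let ρ: X×Y → [0,∞] be a measurable distortion function. Let k ∈ (0,∞), suppose μ is ρ^{1/k}-subregular of dimension m ∈ (0,∞) with subregularity constants c ∈ (0,∞) and δ₀ ∈ (0,∞], and assume μ(X) = 1 if δ₀ < ∞. Then the lower rate-distortion dimension of order k satisfies liminf_{D→0} R_X(D^k)/log(1/D) ≥ m, where R_X(D) is the rate-distortion function. -/
open MeasureTheory Filter Topology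
open scoped ENNReal Classical

/-- The Kullback–Leibler divergence `D_KL(π‖λ) = ∫ log(dπ/dλ) dπ` if `π ≪ λ` (and the
integral makes sense), and `∞` otherwise.  Since the divergences arising in the
rate-distortion function are mutual informations (hence nonnegative), we record the value
in `ℝ≥0∞` by truncating at `0`. -/
noncomputable def klDivNN {Z : Type*} [MeasurableSpace Z] (π lam : Measure Z) : ℝ≥0∞ :=
  if π ≪ lam ∧ Integrable (fun z => Real.log ((π.rnDeriv lam z).toReal)) π then
    ENNReal.ofReal (∫ z, Real.log ((π.rnDeriv lam z).toReal) ∂π)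
  else ∞

/-- The rate-distortion function `R_X(D)`: the infimum of `D_KL(π ‖ π₁ ⊗ π₂)` over all
probability measures `π` on `X × Y` whose first marginal is `μ_X` and which satisfy
`∫ ρ dπ ≤ D` (with `inf ∅ = ∞`). -/
noncomputable def rdFun {A B : Type*} [MeasurableSpace A] [MeasurableSpace B]
    (μX : Measure A) (ρ : A → B → ℝ≥0∞) (D : ℝ) : ℝ≥0∞ :=
  sInf {e : ℝ≥0∞ | ∃ π : Measure (A × B), IsProbabilityMeasure π ∧ π.fst = μX ∧
    (∫⁻ p, ρ p.1 p.2 ∂π) ≤ ENNReal.ofReal D ∧ e = klDivNN π (π.fst.prod π.snd)}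

/-!
For a coupling `γ` of `μ_X` with `E_γ ρ ≤ D`, Gibbs' inequality against the sub-probability
density `q(x, y) = e^{-ρ(x,y)/r} / (Z · dμ_X/dμ(x))` with respect to `μ_X ⊗ γ_Y` gives
`D_KL(γ ‖ γ_X ⊗ γ_Y) ≥ h_μ(X) - D / r - log Z`. The normalisation `Z` comes from subregularity:
`ρ` is subregular of dimension `m / k` at every scale (on a probability space large scales are
free), so splitting `∫ e^{-ρ(x,y)/r} dμ(x)` into the layers `n r ≤ ρ < (n + 1) r` bounds it by
`Z = c' r^{m/k} ∑ₙ e^{-n} (n + 1)^{m/k}`. Taking `r = D^k` yields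
`R_X(D^k) ≥ m log (1 / D) - O(1)`.
-/

open Real

section

/-- A discrete analogue of `Γ(m + 1) = ∫₀^∞ e^{-t} t^m dt`. -/
noncomputable def discreteGamma (m : ℝ) : ℝ := ∑' n : ℕ, exp (-n) * ((n : ℝ) + 1) ^ m

theorem summable_exp_neg_mul_add_one_rpow (m : ℝ) :
    Summable fun n : ℕ => exp (-n) * ((n : ℝ) + 1) ^ m := by
  obtain ⟨N, hN⟩ := exists_nat_ge m
  have hpow : Summable fun n : ℕ => ((n + 1 : ℕ) : ℝ) ^ N * exp (-1 * (n + 1 : ℕ)) :=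
    (summable_nat_add_iff 1).mpr (summable_pow_mul_exp_neg_nat_mul N one_pos)
  refine (hpow.mul_left (exp 1)).of_nonneg_of_le (fun n => by positivity) fun n => ?_
  have hn : (1 : ℝ) ≤ n + 1 := by linarith [n.cast_nonneg (α := ℝ)]
  calc exp (-n) * ((n : ℝ) + 1) ^ m ≤ exp (-n) * ((n : ℝ) + 1) ^ (N : ℝ) := by
        gcongr
    _ = exp 1 * (((n + 1 : ℕ) : ℝ) ^ N * exp (-1 * (n + 1 : ℕ))) := by
        rw [rpow_natCast, mul_left_comm, ← exp_add]
        push_cast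
        ring_nf

theorem discreteGamma_pos (m : ℝ) : 0 < discreteGamma m :=
  (summable_exp_neg_mul_add_one_rpow m).tsum_pos (fun n => by positivity) 0 (by positivity)

-- `e^{-t/r}` on `[0, ∞]`; the `if` is needed because `(∞ : ℝ≥0∞).toReal = 0`.
noncomputable def expNegDiv (r : ℝ) (t : ℝ≥0∞) : ℝ≥0∞ :=
  if t = ∞ then 0 else ENNReal.ofReal (exp (-(t.toReal / r)))

theorem measurable_expNegDiv (r : ℝ) : Measurable (expNegDiv r) :=
  Measurable.ite (measurableSet_singleton ∞) measurable_const (by fun_prop)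

theorem expNegDiv_of_ne_top (r : ℝ) {t : ℝ≥0∞} (ht : t ≠ ∞) :
    expNegDiv r t = ENNReal.ofReal (exp (-(t.toReal / r))) :=
  if_neg ht

theorem exists_lt_and_expNegDiv_le {r : ℝ} (hr : 0 < r) {t : ℝ≥0∞} (ht : t ≠ ∞) :
    ∃ n : ℕ, t < ENNReal.ofReal ((n + 1) * r) ∧ expNegDiv r t ≤ ENNReal.ofReal (exp (-n)) := by
  have hu : 0 ≤ t.toReal / r := by positivity
  refine ⟨⌊t.toReal / r⌋₊, ?_, ?_⟩
  · nth_rw 1 [← ENNReal.ofReal_toReal ht]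
    rw [ENNReal.ofReal_lt_ofReal_iff (by positivity), ← div_lt_iff₀ hr]
    exact Nat.lt_floor_add_one (t.toReal / r)
  · rw [expNegDiv_of_ne_top r ht]
    gcongr
    exact Nat.floor_le hu

variable {A : Type*} [MeasurableSpace A]

theorem lintegral_expNegDiv_le {ν : Measure A} {g : A → ℝ≥0∞} (hg : Measurable g) {m c r : ℝ}
    (hc : 0 ≤ c) (hr : 0 < r)
    (hsub : ∀ t : ℝ, 0 < t → ν {x | g x < ENNReal.ofReal t} ≤ ENNReal.ofReal (c * t ^ m)) :
    ∫⁻ x, expNegDiv r (g x) ∂ν ≤ ENNReal.ofReal (c * r ^ m * discreteGamma m) := by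
  set S : ℕ → Set A := fun n => {x | g x < ENNReal.ofReal ((n + 1) * r)}
  have hS : ∀ n, MeasurableSet (S n) := fun n => measurableSet_lt hg measurable_const
  set F : ℕ → A → ℝ≥0∞ := fun n => (S n).indicator fun _ => ENNReal.ofReal (exp (-n))
  have hpt : ∀ x, expNegDiv r (g x) ≤ ∑' n, F n x := by
    intro x
    by_cases hx : g x = ∞
    · simp [expNegDiv, hx]
    obtain ⟨n, hn, hle⟩ := exists_lt_and_expNegDiv_le hr hx
    calc expNegDiv r (g x) ≤ ENNReal.ofReal (exp (-n)) := hle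
      _ = F n x := by simp only [F, Set.indicator_of_mem (show x ∈ S n from hn)]
      _ ≤ ∑' n, F n x := ENNReal.le_tsum n
  calc ∫⁻ x, expNegDiv r (g x) ∂ν ≤ ∫⁻ x, ∑' n, F n x ∂ν := lintegral_mono hpt
    _ = ∑' n : ℕ, ENNReal.ofReal (exp (-n)) * ν (S n) := by
        rw [lintegral_tsum fun n => (measurable_const.indicator (hS n)).aemeasurable]
        exact tsum_congr fun n => lintegral_indicator_const (hS n) _
    _ ≤ ∑' n : ℕ, ENNReal.ofReal (c * r ^ m * (exp (-n) * ((n : ℝ) + 1) ^ m)) := by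
        gcongr with n
        calc ENNReal.ofReal (exp (-n)) * ν (S n)
            ≤ ENNReal.ofReal (exp (-n)) * ENNReal.ofReal (c * ((n + 1) * r) ^ m) := by
              gcongr
              exact hsub _ (by positivity)
          _ = ENNReal.ofReal (c * r ^ m * (exp (-n) * ((n : ℝ) + 1) ^ m)) := by
              rw [← ENNReal.ofReal_mul (exp_nonneg _), mul_rpow (by positivity) hr.le]
              ring_nf
    _ = ENNReal.ofReal (c * r ^ m * discreteGamma m) := by
        rw [discreteGamma, ← tsum_mul_left, ENNReal.ofReal_tsum_of_nonneg
          (fun n => by positivity) ((summable_exp_neg_mul_add_one_rpow m).mul_left _)]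

theorem lintegral_inv_rnDeriv_mul_le {ν μ : Measure A} [ν.HaveLebesgueDecomposition μ]
    (hνμ : ν ≪ μ) (g : A → ℝ≥0∞) :
    ∫⁻ x, (ν.rnDeriv μ x)⁻¹ * g x ∂ν ≤ ∫⁻ x, g x ∂μ := by
  have h := lintegral_withDensity_le_lintegral_mul μ (Measure.measurable_rnDeriv ν μ)
    fun x => (ν.rnDeriv μ x)⁻¹ * g x
  rw [Measure.withDensity_rnDeriv_eq ν μ hνμ] at h
  refine h.trans (lintegral_mono fun x => ?_)
  simp only [Pi.mul_apply, ← mul_assoc]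
  exact mul_le_of_le_one_left' (ENNReal.mul_inv_le_one _)

theorem integral_log_le_integral_log_rnDeriv {μ ν : Measure A} [IsProbabilityMeasure μ]
    [SigmaFinite ν] (hμν : μ ≪ ν) {h : A → ℝ≥0∞} (hh : Measurable h)
    (hh1 : ∫⁻ z, h z ∂ν ≤ 1) (hpos : ∀ᵐ z ∂μ, 0 < h z)
    (hint_h : Integrable (fun z => log (h z).toReal) μ)
    (hint : Integrable (fun z => log (μ.rnDeriv ν z).toReal) μ) :
    ∫ z, log (h z).toReal ∂μ ≤ ∫ z, log (μ.rnDeriv ν z).toReal ∂μ := by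
  set w := μ.rnDeriv ν
  have hqm : Measurable fun z => (w z)⁻¹ * h z := (Measure.measurable_rnDeriv μ ν).inv.mul hh
  have hq : ∫⁻ z, (w z)⁻¹ * h z ∂μ ≤ 1 := (lintegral_inv_rnDeriv_mul_le hμν h).trans hh1
  have hq_ne_top := ne_top_of_le_ne_top ENNReal.one_ne_top hq
  have hq_int : Integrable (fun z => ((w z)⁻¹ * h z).toReal) μ :=
    integrable_toReal_of_lintegral_ne_top hqm.aemeasurable hq_ne_top
  have hq_le : ∫ z, ((w z)⁻¹ * h z).toReal ∂μ ≤ 1 := by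
    rw [integral_toReal hqm.aemeasurable (ae_lt_top hqm hq_ne_top)]
    exact ENNReal.toReal_le_of_le_ofReal zero_le_one (by simpa using hq)
  have hfin : ∀ᵐ z ∂μ, h z < ∞ :=
    hμν.ae_le (ae_lt_top hh (ne_top_of_le_ne_top ENNReal.one_ne_top hh1))
  -- `log a ≤ a - 1` at `a = h / w`
  have hpt : ∀ᵐ z ∂μ, 1 - ((w z)⁻¹ * h z).toReal ≤ log (w z).toReal - log (h z).toReal := by
    filter_upwards [Measure.rnDeriv_pos hμν, hμν.ae_le (Measure.rnDeriv_lt_top μ ν), hpos, hfin]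
      with z hw0 hw_top hh0 hh_top
    have hw := ENNReal.toReal_pos hw0.ne' hw_top.ne
    have hh' := ENNReal.toReal_pos hh0.ne' hh_top.ne
    have hlog := log_le_sub_one_of_pos (by positivity : 0 < (w z).toReal⁻¹ * (h z).toReal)
    rw [log_mul (by positivity) hh'.ne', log_inv] at hlog
    rw [ENNReal.toReal_mul, ENNReal.toReal_inv]
    linarith
  have hmono : ∫ z, (1 - ((w z)⁻¹ * h z).toReal) ∂μ
      ≤ ∫ z, (log (w z).toReal - log (h z).toReal) ∂μ :=
    integral_mono_ae ((integrable_const 1).sub hq_int) (hint.sub hint_h) hpt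
  rw [integral_sub (integrable_const 1) hq_int, integral_sub hint hint_h] at hmono
  simp only [integral_const, probReal_univ, smul_eq_mul, one_mul] at hmono
  linarith

noncomputable def generalizedEntropy (μX μ : Measure A) : ℝ :=
  -∫ x, log (μX.rnDeriv μ x).toReal ∂μX

section Tilted

variable {B : Type*} {μX μ : Measure A} {ρ : A → B → ℝ≥0∞} {r Z : ℝ}

noncomputable def tiltedDensity (μX μ : Measure A) (ρ : A → B → ℝ≥0∞) (r Z : ℝ) (p : A × B) :
    ℝ≥0∞ :=
  (ENNReal.ofReal Z)⁻¹ * ((μX.rnDeriv μ p.1)⁻¹ * expNegDiv r (ρ p.1 p.2))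

theorem tiltedDensity_pos {p : A × B} (hf : μX.rnDeriv μ p.1 ≠ ∞) (hρp : ρ p.1 p.2 ≠ ∞) :
    0 < tiltedDensity μX μ ρ r Z p := by
  rw [tiltedDensity, expNegDiv_of_ne_top r hρp]
  refine ENNReal.mul_pos (ENNReal.inv_ne_zero.2 ENNReal.ofReal_ne_top)
    (ENNReal.mul_pos (ENNReal.inv_ne_zero.2 hf) ?_).ne'
  exact (ENNReal.ofReal_pos.2 (exp_pos _)).ne'

theorem log_tiltedDensity (hZ : 0 < Z) {p : A × B} (hf0 : μX.rnDeriv μ p.1 ≠ 0)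
    (hf : μX.rnDeriv μ p.1 ≠ ∞) (hρp : ρ p.1 p.2 ≠ ∞) :
    log (tiltedDensity μX μ ρ r Z p).toReal
      = -log Z - log (μX.rnDeriv μ p.1).toReal - (ρ p.1 p.2).toReal / r := by
  have hf' := ENNReal.toReal_pos hf0 hf
  rw [tiltedDensity, expNegDiv_of_ne_top r hρp, ENNReal.toReal_mul, ENNReal.toReal_mul,
    ENNReal.toReal_inv, ENNReal.toReal_inv, ENNReal.toReal_ofReal hZ.le,
    ENNReal.toReal_ofReal (exp_nonneg _), log_mul (by positivity) (by positivity),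
    log_mul (by positivity) (exp_pos _).ne', log_inv, log_inv, log_exp]
  ring

variable [MeasurableSpace B]

theorem measurable_tiltedDensity (hρ : Measurable (Function.uncurry ρ)) :
    Measurable (tiltedDensity μX μ ρ r Z) :=
  measurable_const.mul (((Measure.measurable_rnDeriv μX μ).comp measurable_fst).inv.mul
    ((measurable_expNegDiv r).comp hρ))

theorem lintegral_tiltedDensity_le_one [SigmaFinite μX] [SigmaFinite μ] (hac : μX ≪ μ)
    (hρ : Measurable (Function.uncurry ρ))
    (hexp : ∀ y, ∫⁻ x, expNegDiv r (ρ x y) ∂μ ≤ ENNReal.ofReal Z)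
    (ν : Measure B) [IsProbabilityMeasure ν] :
    ∫⁻ p, tiltedDensity μX μ ρ r Z p ∂(μX.prod ν) ≤ 1 := by
  have hinner : ∀ y, ∫⁻ x, tiltedDensity μX μ ρ r Z (x, y) ∂μX ≤ 1 := fun y =>
    calc ∫⁻ x, tiltedDensity μX μ ρ r Z (x, y) ∂μX
        = (ENNReal.ofReal Z)⁻¹ * ∫⁻ x, (μX.rnDeriv μ x)⁻¹ * expNegDiv r (ρ x y) ∂μX :=
          lintegral_const_mul _ ((Measure.measurable_rnDeriv μX μ).inv.mul
            ((measurable_expNegDiv r).comp (hρ.comp measurable_prodMk_right)))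
      _ ≤ (ENNReal.ofReal Z)⁻¹ * ENNReal.ofReal Z := by
          gcongr
          exact (lintegral_inv_rnDeriv_mul_le hac _).trans (hexp y)
      _ ≤ 1 := ENNReal.inv_mul_le_one _
  rw [lintegral_prod_symm _ (measurable_tiltedDensity hρ).aemeasurable]
  calc ∫⁻ y, ∫⁻ x, tiltedDensity μX μ ρ r Z (x, y) ∂μX ∂ν ≤ ∫⁻ _, 1 ∂ν := lintegral_mono hinner
    _ = 1 := by simp

variable [SigmaFinite μ] [IsProbabilityMeasure μX] {γ : Measure (A × B)}

theorem ae_log_tiltedDensity_eq (hac : μX ≪ μ) (hρ : Measurable (Function.uncurry ρ))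
    (hZ : 0 < Z) (hγ : γ.fst = μX) (hγρ : ∫⁻ p, ρ p.1 p.2 ∂γ ≠ ∞) :
    (fun p => log (tiltedDensity μX μ ρ r Z p).toReal) =ᵐ[γ]
      fun p => -log Z - log (μX.rnDeriv μ p.1).toReal - (ρ p.1 p.2).toReal / r := by
  have hfst : MeasurePreserving Prod.fst γ μX := ⟨measurable_fst, hγ⟩
  filter_upwards [hfst.quasiMeasurePreserving.ae (Measure.rnDeriv_pos hac),
    hfst.quasiMeasurePreserving.ae (hac.ae_le (Measure.rnDeriv_lt_top μX μ)),
    ae_lt_top hρ hγρ] with p hf0 hf hρp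
  exact log_tiltedDensity hZ hf0.ne' hf.ne hρp.ne

variable [IsProbabilityMeasure γ]

theorem integrable_log_tiltedDensity (hac : μX ≪ μ)
    (hent : Integrable (fun x => log (μX.rnDeriv μ x).toReal) μX)
    (hρ : Measurable (Function.uncurry ρ)) (hZ : 0 < Z) (hγ : γ.fst = μX)
    (hγρ : ∫⁻ p, ρ p.1 p.2 ∂γ ≠ ∞) :
    Integrable (fun p => log (tiltedDensity μX μ ρ r Z p).toReal) γ := by
  have hf_int : Integrable (fun p : A × B => log (μX.rnDeriv μ p.1).toReal) γ :=
    MeasurePreserving.integrable_comp_of_integrable ⟨measurable_fst, hγ⟩ hent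
  have hρ_int : Integrable (fun p => (ρ p.1 p.2).toReal) γ :=
    integrable_toReal_of_lintegral_ne_top hρ.aemeasurable hγρ
  exact (((integrable_const _).sub hf_int).sub (hρ_int.div_const r)).congr
    (ae_log_tiltedDensity_eq hac hρ hZ hγ hγρ).symm

theorem integral_log_tiltedDensity (hac : μX ≪ μ)
    (hent : Integrable (fun x => log (μX.rnDeriv μ x).toReal) μX)
    (hρ : Measurable (Function.uncurry ρ)) (hZ : 0 < Z) (hγ : γ.fst = μX)
    (hγρ : ∫⁻ p, ρ p.1 p.2 ∂γ ≠ ∞) :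
    ∫ p, log (tiltedDensity μX μ ρ r Z p).toReal ∂γ
      = generalizedEntropy μX μ - (∫ p, (ρ p.1 p.2).toReal ∂γ) / r - log Z := by
  have hfst : MeasurePreserving Prod.fst γ μX := ⟨measurable_fst, hγ⟩
  have hf_int : Integrable (fun p : A × B => log (μX.rnDeriv μ p.1).toReal) γ :=
    hfst.integrable_comp_of_integrable hent
  have hρ_int : Integrable (fun p => (ρ p.1 p.2).toReal) γ :=
    integrable_toReal_of_lintegral_ne_top hρ.aemeasurable hγρ
  have hf_eq : ∫ p, log (μX.rnDeriv μ p.1).toReal ∂γ = -generalizedEntropy μX μ := by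
    have h := integral_map (μ := γ) measurable_fst.aemeasurable
      (hfst.map_eq ▸ hent.aestronglyMeasurable)
    rw [hfst.map_eq] at h
    rw [generalizedEntropy, neg_neg, h]
  rw [integral_congr_ae (ae_log_tiltedDensity_eq hac hρ hZ hγ hγρ),
    integral_sub (f := fun p => -log Z - log (μX.rnDeriv μ p.1).toReal)
      ((integrable_const _).sub hf_int) (hρ_int.div_const r),
    integral_sub (integrable_const _) hf_int, integral_div, hf_eq]
  simp only [integral_const, probReal_univ, smul_eq_mul, one_mul]
  ring

theorem ofReal_sub_le_klDivNN (hac : μX ≪ μ)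
    (hent : Integrable (fun x => log (μX.rnDeriv μ x).toReal) μX)
    (hρ : Measurable (Function.uncurry ρ)) (hr : 0 < r) (hZ : 0 < Z)
    (hexp : ∀ y, ∫⁻ x, expNegDiv r (ρ x y) ∂μ ≤ ENNReal.ofReal Z)
    {D : ℝ} (hD : 0 ≤ D) (hγ : γ.fst = μX) (hγD : ∫⁻ p, ρ p.1 p.2 ∂γ ≤ ENNReal.ofReal D) :
    ENNReal.ofReal (generalizedEntropy μX μ - D / r - log Z) ≤ klDivNN γ (γ.fst.prod γ.snd) := by
  unfold klDivNN
  split_ifs with hkl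
  swap
  · exact le_top
  obtain ⟨hγ_ac, hint⟩ := hkl
  have hγρ : ∫⁻ p, ρ p.1 p.2 ∂γ ≠ ∞ := ne_top_of_le_ne_top ENNReal.ofReal_ne_top hγD
  have hρ_le : ∫ p, (ρ p.1 p.2).toReal ∂γ ≤ D := by
    rw [integral_toReal (f := fun p : A × B => ρ p.1 p.2) hρ.aemeasurable (ae_lt_top hρ hγρ)]
    exact ENNReal.toReal_le_of_le_ofReal hD hγD
  have hpos : ∀ᵐ p ∂γ, 0 < tiltedDensity μX μ ρ r Z p := by
    filter_upwards [(MeasurePreserving.quasiMeasurePreserving ⟨measurable_fst, hγ⟩).ae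
      (hac.ae_le (Measure.rnDeriv_lt_top μX μ)), ae_lt_top hρ hγρ] with p hf hρp
    exact tiltedDensity_pos hf.ne hρp.ne
  have hnorm : ∫⁻ p, tiltedDensity μX μ ρ r Z p ∂(γ.fst.prod γ.snd) ≤ 1 := by
    rw [hγ]
    exact lintegral_tiltedDensity_le_one hac hρ hexp γ.snd
  apply ENNReal.ofReal_le_ofReal
  calc generalizedEntropy μX μ - D / r - log Z
      ≤ ∫ p, log (tiltedDensity μX μ ρ r Z p).toReal ∂γ := by
        rw [integral_log_tiltedDensity hac hent hρ hZ hγ hγρ]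
        linarith [div_le_div_of_nonneg_right hρ_le hr.le]
    _ ≤ ∫ p, log (γ.rnDeriv (γ.fst.prod γ.snd) p).toReal ∂γ :=
        integral_log_le_integral_log_rnDeriv hγ_ac (measurable_tiltedDensity hρ) hnorm hpos
          (integrable_log_tiltedDensity hac hent hρ hZ hγ hγρ) hint

end Tilted

section Subregular

variable {B : Type*} (μ : Measure A) (ρ : A → B → ℝ≥0∞) (m c : ℝ) (δ₀ : ℝ≥0∞)

def Subregular : Prop :=
  ∀ y : B, ∀ t : ℝ, 0 < t → ENNReal.ofReal t < δ₀ →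
    μ {x | ρ x y < ENNReal.ofReal t} ≤ ENNReal.ofReal (c * t ^ m)

variable {μ ρ m c δ₀}

theorem Subregular.of_rpow {k : ℝ} (hk : 0 < k)
    (h : Subregular μ (fun x y => ρ x y ^ (1 / k)) m c δ₀) :
    Subregular μ ρ (m / k) c (δ₀ ^ k) := by
  intro y t ht htδ
  have hset : {x | ρ x y < ENNReal.ofReal t}
      = {x | ρ x y ^ (1 / k) < ENNReal.ofReal (t ^ (1 / k))} := by
    ext x
    rw [Set.mem_ofPred_eq, Set.mem_ofPred_eq, ← ENNReal.ofReal_rpow_of_pos ht,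
      ENNReal.rpow_lt_rpow_iff (by positivity)]
  have hlt : ENNReal.ofReal (t ^ (1 / k)) < δ₀ :=
    calc ENNReal.ofReal (t ^ (1 / k)) = ENNReal.ofReal t ^ (1 / k) :=
          (ENNReal.ofReal_rpow_of_pos ht).symm
      _ < (δ₀ ^ k) ^ (1 / k) := ENNReal.rpow_lt_rpow htδ (by positivity)
      _ = δ₀ := by rw [← ENNReal.rpow_mul, mul_one_div_cancel hk.ne', ENNReal.rpow_one]
  rw [hset]
  calc _ ≤ ENNReal.ofReal (c * (t ^ (1 / k)) ^ m) := h y _ (by positivity) hlt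
    _ = ENNReal.ofReal (c * t ^ (m / k)) := by rw [← rpow_mul ht.le, one_div_mul_eq_div]

theorem Subregular.exists_le_top [IsFiniteMeasure μ] (h : Subregular μ ρ m c δ₀) (hm : 0 ≤ m)
    (hδ₀ : 0 < δ₀) : ∃ c', c ≤ c' ∧ Subregular μ ρ m c' ∞ := by
  obtain ⟨t₀, ht₀, ht₀δ⟩ : ∃ t₀ : ℝ, 0 < t₀ ∧ ENNReal.ofReal t₀ < δ₀ := by
    obtain ⟨ε, hε, hεδ⟩ := exists_between hδ₀
    exact ⟨ε.toReal, ENNReal.toReal_pos hε.ne' hεδ.ne_top, ENNReal.ofReal_toReal_le.trans_lt hεδ⟩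
  set c' := max c (μ.real Set.univ * t₀ ^ (-m))
  refine ⟨c', le_max_left _ _, fun y t ht _ => ?_⟩
  rcases lt_or_ge t t₀ with htt₀ | htt₀
  · refine (h y t ht ((ENNReal.ofReal_le_ofReal htt₀.le).trans_lt ht₀δ)).trans ?_
    gcongr
    exact le_max_left _ _
  · calc μ {x | ρ x y < ENNReal.ofReal t} ≤ μ Set.univ := measure_mono (Set.subset_univ _)
      _ = ENNReal.ofReal (μ.real Set.univ * t₀ ^ (-m) * t₀ ^ m) := by
        rw [mul_assoc, ← rpow_add ht₀, neg_add_cancel, rpow_zero, mul_one, ofReal_measureReal]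
      _ ≤ ENNReal.ofReal (c' * t ^ m) := by
        gcongr
        exact le_max_right _ _

end Subregular

theorem le_rdFun {B : Type*} [MeasurableSpace B] {μX μ : Measure A} [SigmaFinite μ]
    [IsProbabilityMeasure μX] (hac : μX ≪ μ)
    (hent : Integrable (fun x => log (μX.rnDeriv μ x).toReal) μX)
    {ρ : A → B → ℝ≥0∞} (hρ : Measurable (Function.uncurry ρ)) {m c : ℝ} (hc : 0 < c)
    (hsub : Subregular μ ρ m c ∞) {r D : ℝ} (hr : 0 < r) (hD : 0 ≤ D) :
    ENNReal.ofReal (generalizedEntropy μX μ - D / r - log (c * r ^ m * discreteGamma m))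
      ≤ rdFun μX ρ D := by
  refine le_sInf ?_
  rintro _ ⟨γ, hγ, hγ_fst, hγD, rfl⟩
  have hZ : 0 < c * r ^ m * discreteGamma m :=
    mul_pos (mul_pos hc (rpow_pos_of_pos hr m)) (discreteGamma_pos m)
  refine ofReal_sub_le_klDivNN hac hent hρ hr hZ (fun y => ?_) hD hγ_fst hγD
  exact lintegral_expNegDiv_le (hρ.comp measurable_prodMk_right) hc.le hr
    fun t ht => hsub y t ht ENNReal.ofReal_lt_top

theorem le_liminf_div_log_of_eventually_le {f : ℝ → ℝ≥0∞} {m C : ℝ}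
    (h : ∀ᶠ D in 𝓝[>] (0 : ℝ), ENNReal.ofReal (C + m * log (1 / D)) ≤ f D) :
    ENNReal.ofReal m ≤ liminf (fun D => f D / ENNReal.ofReal (log (1 / D))) (𝓝[>] 0) := by
  have hlog : Tendsto (fun D : ℝ => log (1 / D)) (𝓝[>] 0) atTop := by
    simpa only [one_div, Function.comp_def] using
      tendsto_log_atTop.comp (tendsto_inv_nhdsGT_zero (𝕜 := ℝ))
  have hlim : Tendsto (fun D => ENNReal.ofReal (C / log (1 / D) + m)) (𝓝[>] 0)
      (𝓝 (ENNReal.ofReal m)) := by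
    simpa using ENNReal.tendsto_ofReal ((tendsto_const_nhds.div_atTop hlog).add_const m)
  refine hlim.liminf_eq.symm.le.trans (liminf_le_liminf ?_)
  filter_upwards [h, hlog.eventually_gt_atTop 0] with D hD hpos
  calc ENNReal.ofReal (C / log (1 / D) + m)
      = ENNReal.ofReal (C + m * log (1 / D)) / ENNReal.ofReal (log (1 / D)) := by
        rw [← ENNReal.ofReal_div_of_pos hpos, add_div, mul_div_cancel_right₀ _ hpos.ne']
    _ ≤ f D / ENNReal.ofReal (log (1 / D)) := by gcongr

end

/-- If `μ` is σ-finite, `μ_X ≪ μ` with finite generalized entropy, `μ`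
is `ρ^{1/k}`-subregular of dimension `m` with constants `c ∈ (0,∞)` and `δ₀ ∈ (0,∞]`,
and `μ(X) = 1` whenever `δ₀ < ∞`, then the lower rate-distortion dimension of order `k`
satisfies `liminf_{D→0⁺} R_X(D^k)/log(1/D) ≥ m`. -/
theorem lower_rd_dimension_ge
    {A B : Type*} [MeasurableSpace A] [MeasurableSpace B]
    (μ : Measure A) [SigmaFinite μ] (μX : Measure A) [IsProbabilityMeasure μX]
    (hac : μX ≪ μ)
    (hent : Integrable (fun x => Real.log ((μX.rnDeriv μ x).toReal)) μX)
    (ρ : A → B → ℝ≥0∞) (hρ : Measurable (Function.uncurry ρ))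
    (k m c : ℝ) (δ₀ : ℝ≥0∞) (hk : 0 < k) (hm : 0 < m) (hc : 0 < c) (hδ₀ : 0 < δ₀)
    (hsub : ∀ y : B, ∀ t : ℝ, 0 < t → ENNReal.ofReal t < δ₀ →
      μ {x | (ρ x y) ^ (1 / k) < ENNReal.ofReal t} ≤ ENNReal.ofReal (c * t ^ m))
    (hμ1 : δ₀ < ∞ → IsProbabilityMeasure μ) :
    ENNReal.ofReal m ≤
      Filter.liminf
        (fun D : ℝ => rdFun μX ρ (D ^ k) / ENNReal.ofReal (Real.log (1 / D)))
        (𝓝[>] (0 : ℝ)) := by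
  obtain ⟨c', hcc', hsub'⟩ : ∃ c', c ≤ c' ∧ Subregular μ ρ (m / k) c' ∞ := by
    have hρ_sub : Subregular μ ρ (m / k) c (δ₀ ^ k) := Subregular.of_rpow hk hsub
    rcases eq_or_ne δ₀ ∞ with rfl | hδ
    · exact ⟨c, le_rfl, by rwa [ENNReal.top_rpow_of_pos hk] at hρ_sub⟩
    · have := hμ1 hδ.lt_top
      exact hρ_sub.exists_le_top (by positivity) (ENNReal.rpow_pos hδ₀ hδ)
  have hc' : 0 < c' := hc.trans_le hcc'
  have hK := discreteGamma_pos (m / k)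
  refine le_liminf_div_log_of_eventually_le
    (C := generalizedEntropy μX μ - 1 - log (c' * discreteGamma (m / k))) ?_
  refine eventually_nhdsWithin_of_forall fun D (hD : 0 < D) => ?_
  have hDk : 0 < D ^ k := rpow_pos_of_pos hD k
  convert le_rdFun hac hent hρ hc' hsub' hDk hDk.le using 2
  rw [div_self hDk.ne', ← rpow_mul hD.le, mul_div_cancel₀ _ hk.ne', mul_right_comm,
    log_mul (mul_pos hc' hK).ne' (rpow_pos_of_pos hD m).ne', log_rpow hD, one_div, log_inv]
  ring
end

section
/- Let X be a random variable taking values in a σ-finite measure space (X,𝒳,μ) whose distribution μ_X satisfies μ_X ≪ μ and Σ_p(X) := ‖dμ_X/dμ‖_{p/(p-1)}^{(μ)} < ∞ for some p ∈ [1,∞), let (Y,𝒴) be a measurable space, and let ρ: X×Y → [0,∞] be a measurable distortion function. Let k ∈ (0,∞) and suppose μ is ρ^{1/k}-subregular of dimension m ∈ (0,∞) with subregularity constants c ∈ (0,∞) and δ₀ ∈ (0,∞]. Then the n-th quantization error satisfies V_n(X) ≥ min{ c^{-k/m}·Σ_p(X)^{-pk/m}·n^{-pk/m}, δ₀^k }·m/(m+pk)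 for all n ∈ ℕ. -/
/-!
Fix an `n`-point quantizer `f` with codebook `s`. The event `ρ(X, f X) < t` is covered by the `n`
sublevel sets `ρ(·, y) < t`, `y ∈ s`, so subregularity bounds its `μ`-measure by `n c t^(m/k)`, and
Hölder's inequality against the density `dμ_X/dμ` turns this into
`P(ρ(X, f X) < t) ≤ Σ_p(X) (n c t^(m/k))^(1/p)`. Below the threshold
`T = min(c^(-k/m) Σ_p(X)^(-pk/m) n^(-pk/m), δ₀^k)` this is at most `(t/T)^α` with `α = m/(pk)`,
and the layer-cake formula gives `E ρ(X, f X) ≥ ∫_0^T (1 - (t/T)^α) dt = T α/(α+1)`.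
-/

open MeasureTheory
open scoped ENNReal Classical

/-- The `q`-norm (with respect to `μ`) of an `ℝ≥0∞`-valued function;
for `q = ∞` it is the `μ`-essential supremum. -/
noncomputable def lpNormENN {X : Type*} [MeasurableSpace X] (μ : Measure X)
    (f : X → ℝ≥0∞) (q : ℝ≥0∞) : ℝ≥0∞ :=
  if q = ∞ then essSup f μ else (∫⁻ x, (f x) ^ q.toReal ∂μ) ^ (1 / q.toReal)

/-- The conjugate exponent `p/(p-1) ∈ (1,∞]` of `p ∈ [1,∞)` (as an element of `ℝ≥0∞`),
with the convention that the conjugate exponent of `p = 1` is `∞`. -/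
noncomputable def conjExp (p : ℝ) : ℝ≥0∞ :=
  if p = 1 then ∞ else ENNReal.ofReal (p / (p - 1))

/-- The `n`-th quantization error `V_n(X) = inf_f E[ρ(X, f(X))]`, the infimum being over
all measurable maps `f : X → Y` whose range contains at most `n` points. -/
noncomputable def quantErr {X Y : Type*} [MeasurableSpace X] [MeasurableSpace Y]
    (μX : Measure X) (ρ : X → Y → ℝ≥0∞) (n : ℕ) : ℝ≥0∞ :=
  ⨅ (f : X → Y)
    (_ : Measurable f ∧ ∃ s : Finset Y, s.card ≤ n ∧ ∀ x, f x ∈ s),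
    ∫⁻ x, ρ x (f x) ∂μX

section Holder

variable {X : Type*} [MeasurableSpace X] {μ : Measure X}

lemma lpNormENN_conjExp_one (f : X → ℝ≥0∞) : lpNormENN μ f (conjExp 1) = essSup f μ := by
  simp [lpNormENN, conjExp]

lemma lpNormENN_conjExp_of_holderConjugate {p q : ℝ} (hpq : p.HolderConjugate q) (f : X → ℝ≥0∞) :
    lpNormENN μ f (conjExp p) = (∫⁻ x, f x ^ q ∂μ) ^ (1 / q) := by
  have hconj : conjExp p = ENNReal.ofReal q := by
    rw [conjExp, if_neg hpq.lt.ne', ← hpq.conjExponent_eq, Real.conjExponent]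
  simp [lpNormENN, hconj, ENNReal.toReal_ofReal hpq.symm.nonneg]

lemma setLIntegral_le_lpNormENN_conjExp_mul {f : X → ℝ≥0∞} (hf : Measurable f) {p : ℝ}
    (hp : 1 ≤ p) (A : Set X) :
    ∫⁻ x in A, f x ∂μ ≤ lpNormENN μ f (conjExp p) * μ A ^ (1 / p) := by
  rcases hp.eq_or_lt with rfl | hp
  · calc ∫⁻ x in A, f x ∂μ ≤ ∫⁻ _ in A, essSup f μ ∂μ :=
          lintegral_mono_ae (ae_restrict_of_ae (ENNReal.ae_le_essSup f))
      _ = lpNormENN μ f (conjExp 1) * μ A ^ (1 / (1 : ℝ)) := by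
          simp [lpNormENN_conjExp_one]
  · have hpq := Real.HolderConjugate.conjExponent hp
    calc ∫⁻ x in A, f x ∂μ = ∫⁻ x in A, (1 * f) x ∂μ := by simp
      _ ≤ (∫⁻ _ in A, 1 ^ p ∂μ) ^ (1 / p) *
            (∫⁻ x in A, f x ^ p.conjExponent ∂μ) ^ (1 / p.conjExponent) :=
          ENNReal.lintegral_mul_le_Lp_mul_Lq _ hpq aemeasurable_const hf.aemeasurable
      _ ≤ μ A ^ (1 / p) * (∫⁻ x, f x ^ p.conjExponent ∂μ) ^ (1 / p.conjExponent) := by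
          simp only [ENNReal.one_rpow, setLIntegral_const, one_mul]
          gcongr
          · exact hpq.symm.one_div_nonneg
          · exact Measure.restrict_le_self
      _ = lpNormENN μ f (conjExp p) * μ A ^ (1 / p) := by
          rw [lpNormENN_conjExp_of_holderConjugate hpq, mul_comm]

lemma measure_le_lpNormENN_rnDeriv_mul {ν : Measure X} [ν.HaveLebesgueDecomposition μ]
    [SFinite μ] (hνμ : ν ≪ μ) {p : ℝ} (hp : 1 ≤ p) (A : Set X) :
    ν A ≤ lpNormENN μ (ν.rnDeriv μ) (conjExp p) * μ A ^ (1 / p) := by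
  rw [← Measure.setLIntegral_rnDeriv hνμ A]
  exact setLIntegral_le_lpNormENN_conjExp_mul (ν.measurable_rnDeriv μ) hp A

lemma lpNormENN_rnDeriv_ne_zero {ν : Measure X} [ν.HaveLebesgueDecomposition μ] [SFinite μ]
    (hν : ν ≠ 0) (hνμ : ν ≪ μ) {p : ℝ} (hp : 1 ≤ p) :
    lpNormENN μ (ν.rnDeriv μ) (conjExp p) ≠ 0 := by
  intro h
  -- `0 * ∞ = 0`, so this also works when `μ` is infinite
  have := measure_le_lpNormENN_rnDeriv_mul hνμ hp Set.univ
  rw [h, zero_mul, nonpos_iff_eq_zero, Measure.measure_univ_eq_zero] at this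
  exact hν this

end Holder

section LayerCake

variable {X : Type*} [MeasurableSpace X]

lemma setLIntegral_Ioo_meas_le_le_lintegral (ν : Measure X) {g : X → ℝ≥0∞} (hg : Measurable g)
    (T : ℝ) :
    ∫⁻ t in Set.Ioo 0 T, ν {x | ENNReal.ofReal t ≤ g x} ≤ ∫⁻ x, g x ∂ν := by
  -- layer-cake formula for the truncation `min g T`, which is real-valued
  set h : X → ℝ := fun x => (min (g x) (ENNReal.ofReal T)).toReal
  have h_ne_top : ∀ x, min (g x) (ENNReal.ofReal T) ≠ ∞ :=
    fun x => (min_le_right _ _).trans_lt ENNReal.ofReal_lt_top |>.ne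
  have h_level : ∀ t ∈ Set.Ioo 0 T, {x | t ≤ h x} = {x | ENNReal.ofReal t ≤ g x} := by
    intro t ht
    ext x
    simp [h, ← ENNReal.ofReal_le_iff_le_toReal (h_ne_top x), ENNReal.ofReal_le_ofReal ht.2.le]
  calc ∫⁻ t in Set.Ioo 0 T, ν {x | ENNReal.ofReal t ≤ g x}
      = ∫⁻ t in Set.Ioo 0 T, ν {x | t ≤ h x} :=
        setLIntegral_congr_fun measurableSet_Ioo fun t ht => by rw [h_level t ht]
    _ ≤ ∫⁻ t in Set.Ioi 0, ν {x | t ≤ h x} := lintegral_mono_set Set.Ioo_subset_Ioi_self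
    _ = ∫⁻ x, ENNReal.ofReal (h x) ∂ν :=
        (lintegral_eq_lintegral_meas_le ν (.of_forall fun x => ENNReal.toReal_nonneg)
          (hg.min measurable_const).ennreal_toReal.aemeasurable).symm
    _ ≤ ∫⁻ x, g x ∂ν := lintegral_mono fun x => by
        simp only [h, ENNReal.ofReal_toReal (h_ne_top x), min_le_left]

lemma integral_one_sub_div_rpow {T α : ℝ} (hT : 0 < T) (hα : 0 < α) :
    ∫ t in (0)..T, (1 - (t / T) ^ α) = T * (α / (α + 1)) := by
  have hint : IntervalIntegrable (fun t : ℝ => t ^ α) volume 0 1 :=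
    intervalIntegral.intervalIntegrable_rpow' (by linarith)
  rw [intervalIntegral.integral_comp_div (fun t => 1 - t ^ α) hT.ne', zero_div, div_self hT.ne',
    intervalIntegral.integral_sub intervalIntegrable_const hint, integral_rpow (by left; linarith),
    intervalIntegral.integral_const, Real.zero_rpow (by linarith), Real.one_rpow]
  simp only [sub_zero, smul_eq_mul, mul_one]
  field_simp
  ring

lemma ofReal_mul_le_lintegral_of_meas_lt_le (ν : Measure X) [IsProbabilityMeasure ν]
    {g : X → ℝ≥0∞} (hg : Measurable g) {T α : ℝ} (hT : 0 < T) (hα : 0 < α)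
    (htail : ∀ t ∈ Set.Ioo 0 T, ν {x | g x < ENNReal.ofReal t} ≤ ENNReal.ofReal ((t / T) ^ α)) :
    ENNReal.ofReal (T * (α / (α + 1))) ≤ ∫⁻ x, g x ∂ν := by
  have hsurv : ∀ t ∈ Set.Ioo 0 T,
      ENNReal.ofReal (1 - (t / T) ^ α) ≤ ν {x | ENNReal.ofReal t ≤ g x} := by
    intro t ht
    have hlt : MeasurableSet {x | g x < ENNReal.ofReal t} := measurableSet_lt hg measurable_const
    have hcompl : {x | ENNReal.ofReal t ≤ g x} = {x | g x < ENNReal.ofReal t}ᶜ := by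
      ext x; simp
    rw [hcompl, prob_compl_eq_one_sub hlt,
      ENNReal.ofReal_sub _ (Real.rpow_nonneg (div_nonneg ht.1.le hT.le) α), ENNReal.ofReal_one]
    exact tsub_le_tsub_left (htail t ht) 1
  have hnonneg : ∀ t ∈ Set.Ioo 0 T, 0 ≤ 1 - (t / T) ^ α := fun t ht => by
    rw [sub_nonneg]
    exact Real.rpow_le_one (div_nonneg ht.1.le hT.le) ((div_le_one hT).2 ht.2.le) hα.le
  calc ENNReal.ofReal (T * (α / (α + 1)))
      = ENNReal.ofReal (∫ t in Set.Ioo 0 T, (1 - (t / T) ^ α)) := by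
        rw [← integral_Ioc_eq_integral_Ioo, ← intervalIntegral.integral_of_le hT.le,
          integral_one_sub_div_rpow hT hα]
    _ = ∫⁻ t in Set.Ioo 0 T, ENNReal.ofReal (1 - (t / T) ^ α) := by
        refine ofReal_integral_eq_lintegral_ofReal ?_ ?_
        · exact (Continuous.integrableOn_Icc (by fun_prop (disch := positivity))).mono_set
            Set.Ioo_subset_Icc_self
        · exact (ae_restrict_mem measurableSet_Ioo).mono hnonneg
    _ ≤ ∫⁻ t in Set.Ioo 0 T, ν {x | ENNReal.ofReal t ≤ g x} :=
        setLIntegral_mono' measurableSet_Ioo hsurv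
    _ ≤ ∫⁻ x, g x ∂ν := setLIntegral_Ioo_meas_le_le_lintegral ν hg T

end LayerCake

section Codebook

variable {X Y : Type*} [MeasurableSpace X]

lemma measure_setOf_comp_le_card_mul (μ : Measure X) (P : X → Y → Prop) {f : X → Y}
    {s : Finset Y} (hf : ∀ x, f x ∈ s) {B : ℝ≥0∞} (hB : ∀ y ∈ s, μ {x | P x y} ≤ B) :
    μ {x | P x (f x)} ≤ s.card * B :=
  calc μ {x | P x (f x)} ≤ μ (⋃ y ∈ s, {x | P x y}) :=
        measure_mono fun x hx => Set.mem_biUnion (hf x) hx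
    _ ≤ ∑ y ∈ s, μ {x | P x y} := measure_biUnion_finset_le s _
    _ ≤ ∑ _y ∈ s, B := Finset.sum_le_sum hB
    _ = s.card * B := by rw [Finset.sum_const, nsmul_eq_mul]

lemma measure_lt_le_of_subregular_rpow (μ : Measure X) {ρ : X → ℝ≥0∞} {k m c : ℝ} {δ₀ : ℝ≥0∞}
    (hk : 0 < k)
    (hsub : ∀ t : ℝ, 0 < t → ENNReal.ofReal t < δ₀ →
      μ {x | ρ x ^ (1 / k) < ENNReal.ofReal t} ≤ ENNReal.ofReal (c * t ^ m))
    {t : ℝ} (ht : 0 < t) (htδ : ENNReal.ofReal t < δ₀ ^ k) :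
    μ {x | ρ x < ENNReal.ofReal t} ≤ ENNReal.ofReal (c * t ^ (m / k)) := by
  have hk' : 0 < 1 / k := one_div_pos.2 hk
  have hroot : ENNReal.ofReal (t ^ (1 / k)) = ENNReal.ofReal t ^ (1 / k) :=
    (ENNReal.ofReal_rpow_of_pos ht).symm
  have hδ : ENNReal.ofReal (t ^ (1 / k)) < δ₀ := by
    rw [hroot, ← ENNReal.rpow_lt_rpow_iff hk, ← ENNReal.rpow_mul, one_div_mul_cancel hk.ne',
      ENNReal.rpow_one]
    exact htδ
  have hset :
      {x | ρ x ^ (1 / k) < ENNReal.ofReal (t ^ (1 / k))} = {x | ρ x < ENNReal.ofReal t} := by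
    ext x
    simp only [Set.mem_ofPred_eq, hroot, ENNReal.rpow_lt_rpow_iff hk']
  have := hsub _ (Real.rpow_pos_of_pos ht _) hδ
  rwa [hset, ← Real.rpow_mul ht.le, one_div_mul_eq_div] at this

end Codebook

lemma mul_rpow_le_div_rpow_of_le {c S n p k m t T : ℝ} (hc : 0 < c) (hS : 0 < S) (hn : 1 ≤ n)
    (hp : 1 ≤ p) (hk : 0 < k) (hm : 0 < m) (ht : 0 < t) (hT : 0 < T)
    (hTA : T ≤ c ^ (-(k / m)) * S ^ (-(p * k / m)) * n ^ (-(p * k / m))) :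
    S * (n * (c * t ^ (m / k))) ^ (1 / p) ≤ (t / T) ^ (m / (p * k)) := by
  have hp0 : 0 < p := one_pos.trans_le hp
  have hn0 : 0 < n := one_pos.trans_le hn
  set α := m / (p * k) with hα
  set A := c ^ (-(k / m)) * S ^ (-(p * k / m)) * n ^ (-(p * k / m))
  have hA : A ^ α = (n * (c ^ (1 / p) * S))⁻¹ := by
    have e1 : -(k / m) * α = -(1 / p) := by rw [hα]; field_simp
    have e2 : -(p * k / m) * α = -1 := by rw [hα]; field_simp
    rw [Real.mul_rpow (by positivity) (by positivity),
      Real.mul_rpow (by positivity) (by positivity),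
      ← Real.rpow_mul hc.le, ← Real.rpow_mul hS.le, ← Real.rpow_mul hn0.le, e1, e2,
      Real.rpow_neg hc.le, Real.rpow_neg_one, Real.rpow_neg_one]
    field_simp
  calc S * (n * (c * t ^ (m / k))) ^ (1 / p)
      = n ^ (1 / p) * (c ^ (1 / p) * S) * t ^ α := by
        rw [Real.mul_rpow hn0.le (by positivity), Real.mul_rpow hc.le (by positivity),
          ← Real.rpow_mul ht.le, div_mul_div_comm, mul_one, mul_comm k p]
        ring
    _ ≤ n * (c ^ (1 / p) * S) * t ^ α := by
        gcongr
        exact Real.rpow_le_self_of_one_le hn ((div_le_one hp0).2 hp)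
    _ = t ^ α / A ^ α := by rw [hA, div_inv_eq_mul, mul_comm]
    _ ≤ t ^ α / T ^ α := by gcongr
    _ = (t / T) ^ α := (Real.div_rpow ht.le hT.le α).symm

lemma measure_distortion_lt_le {X Y : Type*} [MeasurableSpace X] {μ μX : Measure X}
    [μX.HaveLebesgueDecomposition μ] [SFinite μ] (hac : μX ≪ μ) {ρ : X → Y → ℝ≥0∞}
    {p k m c : ℝ} {δ₀ : ℝ≥0∞} (hp : 1 ≤ p) (hk : 0 < k)
    (hsub : ∀ y : Y, ∀ t : ℝ, 0 < t → ENNReal.ofReal t < δ₀ →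
      μ {x | (ρ x y) ^ (1 / k) < ENNReal.ofReal t} ≤ ENNReal.ofReal (c * t ^ m))
    {n : ℕ} {f : X → Y} {s : Finset Y} (hcard : s.card ≤ n) (hf : ∀ x, f x ∈ s)
    {t : ℝ} (ht : 0 < t) (htδ : ENNReal.ofReal t < δ₀ ^ k) :
    μX {x | ρ x (f x) < ENNReal.ofReal t} ≤
      lpNormENN μ (μX.rnDeriv μ) (conjExp p) *
        (n * ENNReal.ofReal (c * t ^ (m / k))) ^ (1 / p) := by
  refine (measure_le_lpNormENN_rnDeriv_mul hac hp _).trans ?_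
  gcongr
  calc μ {x | ρ x (f x) < ENNReal.ofReal t}
      ≤ s.card * ENNReal.ofReal (c * t ^ (m / k)) :=
        measure_setOf_comp_le_card_mul μ (fun x y => ρ x y < ENNReal.ofReal t) hf
          fun y _ => measure_lt_le_of_subregular_rpow μ hk (hsub y) ht htδ
    _ ≤ n * ENNReal.ofReal (c * t ^ (m / k)) := by gcongr

lemma exists_pos_ofReal_eq_min {A : ℝ} (hA : 0 < A) {δ : ℝ≥0∞} (hδ : 0 < δ) :
    ∃ T : ℝ, 0 < T ∧ T ≤ A ∧ ENNReal.ofReal T = min (ENNReal.ofReal A) δ := by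
  have hne_top : min (ENNReal.ofReal A) δ ≠ ∞ := (min_lt_of_left_lt ENNReal.ofReal_lt_top).ne
  refine ⟨_, ENNReal.toReal_pos (lt_min (ENNReal.ofReal_pos.2 hA) hδ).ne' hne_top, ?_,
    ENNReal.ofReal_toReal hne_top⟩
  exact ENNReal.toReal_le_of_le_ofReal hA.le (min_le_left _ _)

/-- Lower bound on the `n`-th quantization error: if `μ_X ≪ μ` with
`Σ_p(X) = ‖dμ_X/dμ‖_{p/(p-1)}^{(μ)} < ∞` and `μ` is `ρ^{1/k}`-subregular of dimension `m`
with constants `c, δ₀`, then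
`V_n(X) ≥ min{c^{-k/m}·Σ_p(X)^{-pk/m}·n^{-pk/m}, δ₀^k}·m/(m+pk)` for all `n`. -/
theorem quantization_error_lower_bound
    {X Y : Type*} [MeasurableSpace X] [MeasurableSpace Y]
    (μ : Measure X) [SigmaFinite μ] (μX : Measure X) [IsProbabilityMeasure μX]
    (hac : μX ≪ μ)
    (ρ : X → Y → ℝ≥0∞) (hρ : Measurable (Function.uncurry ρ))
    (p : ℝ) (hp : 1 ≤ p)
    (hSig : lpNormENN μ (μX.rnDeriv μ) (conjExp p) < ∞)
    (k m c : ℝ) (δ₀ : ℝ≥0∞) (hk : 0 < k) (hm : 0 < m) (hc : 0 < c) (hδ₀ : 0 < δ₀)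
    (hsub : ∀ y : Y, ∀ t : ℝ, 0 < t → ENNReal.ofReal t < δ₀ →
      μ {x | (ρ x y) ^ (1 / k) < ENNReal.ofReal t} ≤ ENNReal.ofReal (c * t ^ m)) :
    ∀ n : ℕ, 1 ≤ n →
      min (ENNReal.ofReal (c ^ (-(k / m))) *
            (lpNormENN μ (μX.rnDeriv μ) (conjExp p)) ^ (-(p * k / m)) *
            (n : ℝ≥0∞) ^ (-(p * k / m)))
          (δ₀ ^ k) * ENNReal.ofReal (m / (m + p * k)) ≤ quantErr μX ρ n := by
  intro n hn
  set Sig := lpNormENN μ (μX.rnDeriv μ) (conjExp p)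
  have hS : 0 < Sig.toReal :=
    ENNReal.toReal_pos (lpNormENN_rnDeriv_ne_zero (IsProbabilityMeasure.ne_zero μX) hac hp) hSig.ne
  have hn1 : (1 : ℝ) ≤ n := by exact_mod_cast hn
  set A := c ^ (-(k / m)) * Sig.toReal ^ (-(p * k / m)) * (n : ℝ) ^ (-(p * k / m))
  have hA : ENNReal.ofReal (c ^ (-(k / m))) * Sig ^ (-(p * k / m)) * (n : ℝ≥0∞) ^ (-(p * k / m))
      = ENNReal.ofReal A := by
    rw [← ENNReal.ofReal_toReal hSig.ne, ← ENNReal.ofReal_natCast, ENNReal.ofReal_rpow_of_pos hS,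
      ENNReal.ofReal_rpow_of_pos (by positivity), ← ENNReal.ofReal_mul (by positivity),
      ← ENNReal.ofReal_mul (by positivity)]
  obtain ⟨T, hT, hTA, hT_eq⟩ :=
    exists_pos_ofReal_eq_min (A := A) (by positivity) (ENNReal.rpow_pos_of_nonneg hδ₀ hk.le)
  have hexp : m / (m + p * k) = m / (p * k) / (m / (p * k) + 1) := by field_simp
  rw [hA, ← hT_eq, hexp, ← ENNReal.ofReal_mul hT.le, quantErr]
  refine le_iInf₂ fun f ⟨hfm, s, hcard, hf⟩ => ofReal_mul_le_lintegral_of_meas_lt_le μX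
    (hρ.comp (measurable_id.prodMk hfm)) hT (by positivity) fun t ⟨ht, htT⟩ => ?_
  have htδ : ENNReal.ofReal t < δ₀ ^ k :=
    ((ENNReal.ofReal_lt_ofReal_iff hT).2 htT).trans_le (hT_eq ▸ min_le_right _ _)
  calc μX {x | ρ x (f x) < ENNReal.ofReal t}
      ≤ Sig * (n * ENNReal.ofReal (c * t ^ (m / k))) ^ (1 / p) :=
        measure_distortion_lt_le hac hp hk hsub hcard hf ht htδ
    _ = ENNReal.ofReal (Sig.toReal * (n * (c * t ^ (m / k))) ^ (1 / p)) := by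
        rw [ENNReal.ofReal_mul hS.le, ENNReal.ofReal_toReal hSig.ne,
          ← ENNReal.ofReal_rpow_of_nonneg (by positivity) (by positivity),
          ENNReal.ofReal_mul n.cast_nonneg, ENNReal.ofReal_natCast]
    _ ≤ ENNReal.ofReal ((t / T) ^ (m / (p * k))) := ENNReal.ofReal_le_ofReal
        (mul_rpow_le_div_rpow_of_le hc hS hn1 hp hk hm ht hT hTA)
end
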